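/- arXiv:2605.07077 — 3 statements merged into one kernel-verified Lean document; each statement's English description precedes it below -/
import Mathlib

section
/- For matroids M₁ and M₂ on disjoint ground sets, the Möbius inversion of the topological zeta function is multiplicative: Y_{M₁ ⊕ M₂}(s) = Y_{M₁}(s) · Y_{M₂}(s). -/
open scoped Classical
open Polynomial

/-- The unsigned Stirling number of the first kind `c(n,k)`: the number of
permutations of an `n`-element set with exactly `k` disjoint cycles
(fixed points count as cycles). -/
noncomputable def stirlingFirst (n k : ℕ) : ℕ :=
  (Finset.univ.filter fun σ : Equiv.Perm (Fin n) =>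
    Multiset.card σ.cycleType + (n - σ.support.card) = k).card

/-- The Stirling number of the second kind `S(n,k)`: the number of partitions of an
`n`-element set into exactly `k` nonempty parts. -/
noncomputable def stirlingSecond (n k : ℕ) : ℕ :=
  (Finset.univ.filter fun P : Finset (Finset (Fin n)) =>
    P.card = k ∧ ∅ ∉ P ∧ (P : Set (Finset (Fin n))).PairwiseDisjoint id ∧
      P.sup id = Finset.univ).card

/-- A matroid on a finite ground set `E`, presented by its rank function. -/
structure FinMatroid (α : Type*) [DecidableEq α] where
  E : Finset α
  rk : Finset α → ℕ
  rk_empty : rk ∅ = 0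
  rk_le_card : ∀ S : Finset α, rk S ≤ S.card
  rk_mono : ∀ ⦃S T : Finset α⦄, S ⊆ T → rk S ≤ rk T
  rk_submod : ∀ S T : Finset α, rk (S ∪ T) + rk (S ∩ T) ≤ rk S + rk T

namespace FinMatroid

variable {α : Type*} [DecidableEq α]

/-- A flat of a matroid: a subset of the ground set such that adding any new element
of the ground set increases the rank. -/
def IsFlat (M : FinMatroid α) (F : Finset α) : Prop :=
  F ⊆ M.E ∧ ∀ x ∈ M.E, x ∉ F → M.rk F < M.rk (insert x F)

/-- The lattice of flats `L(M)`, as a finset. -/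
noncomputable def flats (M : FinMatroid α) : Finset (Finset α) :=
  M.E.powerset.filter fun F => M.IsFlat F

/-- The proper flats, i.e. flats different from the ground set. -/
noncomputable def properFlats (M : FinMatroid α) : Finset (Finset α) :=
  M.flats.filter fun F => F ≠ M.E

/-- A matroid is loopless if every singleton of the ground set has rank one. -/
def Loopless (M : FinMatroid α) : Prop := ∀ x ∈ M.E, M.rk {x} = 1

/-- The restriction `M|F` of a matroid to a subset of its ground set. -/
def restrict (M : FinMatroid α) (F : Finset α) : FinMatroid α :=
  ⟨F, M.rk, M.rk_empty, M.rk_le_card, M.rk_mono, M.rk_submod⟩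

/-- The characteristic polynomial attached to a ground set and a rank function:
`χ(q) = ∑_{S ⊆ E} (-1)^{|S|} q^{rk E - rk S}`. -/
noncomputable def charPolyAux (E : Finset α) (rk : Finset α → ℕ) : Polynomial ℚ :=
  ∑ S ∈ E.powerset, (-1 : Polynomial ℚ) ^ S.card * X ^ (rk E - rk S)

/-- The characteristic polynomial `χ_M(q)` of a matroid. -/
noncomputable def charPoly (M : FinMatroid α) : Polynomial ℚ := charPolyAux M.E M.rk

/-- The characteristic polynomial `χ_{M/F}(q)` of the contraction of `M` at `F`. -/
noncomputable def contractCharPoly (M : FinMatroid α) (F : Finset α) : Polynomial ℚ :=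
  charPolyAux (M.E \ F) fun S => M.rk (S ∪ F) - M.rk F

/-- The reduced characteristic polynomial `χ̄(q) = χ(q)/(q-1)`. -/
noncomputable def reducedCharPoly (p : Polynomial ℚ) : Polynomial ℚ := p /ₘ (X - C 1)

/-- The value `χ̄_{M/F}(1)` of the reduced characteristic polynomial of `M/F` at `q = 1`. -/
noncomputable def redCharContractOne (M : FinMatroid α) (F : Finset α) : ℚ :=
  (reducedCharPoly (M.contractCharPoly F)).eval 1

/-- The truncation `tr(M)`, with rank function `S ↦ min (rk S) (rk M - 1)`. -/
def truncation (M : FinMatroid α) : FinMatroid α where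
  E := M.E
  rk S := min (M.rk S) (M.rk M.E - 1)
  rk_empty := by simp [M.rk_empty]
  rk_le_card S := le_trans (min_le_left _ _) (M.rk_le_card S)
  rk_mono S T h := min_le_min (M.rk_mono h) le_rfl
  rk_submod S T := by
    have h1 := M.rk_submod S T
    have h2 : M.rk S ≤ M.rk (S ∪ T) := M.rk_mono Finset.subset_union_left
    have h3 : M.rk T ≤ M.rk (S ∪ T) := M.rk_mono Finset.subset_union_right
    have h4 : M.rk (S ∩ T) ≤ M.rk S := M.rk_mono Finset.inter_subset_left
    simp only [Nat.min_def]
    split_ifs <;> omega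

/-- The direct sum `M₁ ⊕ M₂` of two matroids on disjoint ground sets. -/
def directSum (M₁ M₂ : FinMatroid α) (h : Disjoint M₁.E M₂.E) : FinMatroid α where
  E := M₁.E ∪ M₂.E
  rk S := M₁.rk (S ∩ M₁.E) + M₂.rk (S ∩ M₂.E)
  rk_empty := by simp [M₁.rk_empty, M₂.rk_empty]
  rk_le_card S := by
    have hd : Disjoint (S ∩ M₁.E) (S ∩ M₂.E) :=
      h.mono Finset.inter_subset_right Finset.inter_subset_right
    calc M₁.rk (S ∩ M₁.E) + M₂.rk (S ∩ M₂.E)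
        ≤ (S ∩ M₁.E).card + (S ∩ M₂.E).card :=
          add_le_add (M₁.rk_le_card _) (M₂.rk_le_card _)
      _ = ((S ∩ M₁.E) ∪ (S ∩ M₂.E)).card := (Finset.card_union_of_disjoint hd).symm
      _ ≤ S.card := Finset.card_le_card
          (Finset.union_subset Finset.inter_subset_left Finset.inter_subset_left)
  rk_mono S T hST :=
    add_le_add (M₁.rk_mono (Finset.inter_subset_inter hST subset_rfl))
      (M₂.rk_mono (Finset.inter_subset_inter hST subset_rfl))
  rk_submod S T := by
    have e1 : ∀ E' : Finset α, (S ∪ T) ∩ E' = (S ∩ E') ∪ (T ∩ E') := by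
      intro E'; ext x; simp only [Finset.mem_union, Finset.mem_inter]; tauto
    have e2 : ∀ E' : Finset α, (S ∩ T) ∩ E' = (S ∩ E') ∩ (T ∩ E') := by
      intro E'; ext x; simp only [Finset.mem_inter]; tauto
    simp only [e1, e2]
    have h1 := M₁.rk_submod (S ∩ M₁.E) (T ∩ M₁.E)
    have h2 := M₂.rk_submod (S ∩ M₂.E) (T ∩ M₂.E)
    omega

/-- The free matroid `U_{n,n}` on a ground set `E` with `|E| = n`. -/
def freeM (E : Finset α) : FinMatroid α where
  E := E
  rk S := (S ∩ E).card
  rk_empty := by simp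
  rk_le_card S := Finset.card_le_card Finset.inter_subset_left
  rk_mono S T h := Finset.card_le_card (Finset.inter_subset_inter h subset_rfl)
  rk_submod S T := by
    have e1 : (S ∪ T) ∩ E = (S ∩ E) ∪ (T ∩ E) := by
      ext x; simp only [Finset.mem_union, Finset.mem_inter]; tauto
    have e2 : (S ∩ T) ∩ E = (S ∩ E) ∩ (T ∩ E) := by
      ext x; simp only [Finset.mem_inter]; tauto
    simp only [e1, e2]
    exact (Finset.card_union_add_card_inter _ _).le

/-- The uniform matroid `U_{r,n}` on a ground set `E` with `|E| = n`. -/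
def uniformM (E : Finset α) (r : ℕ) : FinMatroid α where
  E := E
  rk S := min (S ∩ E).card r
  rk_empty := by simp
  rk_le_card S := le_trans (min_le_left _ _) (Finset.card_le_card Finset.inter_subset_left)
  rk_mono S T h := min_le_min (Finset.card_le_card (Finset.inter_subset_inter h subset_rfl)) le_rfl
  rk_submod S T := by
    have e1 : (S ∪ T) ∩ E = (S ∩ E) ∪ (T ∩ E) := by
      ext x; simp only [Finset.mem_union, Finset.mem_inter]; tauto
    have e2 : (S ∩ T) ∩ E = (S ∩ E) ∩ (T ∩ E) := by
      ext x; simp only [Finset.mem_inter]; tauto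
    have h3 := Finset.card_union_add_card_inter (S ∩ E) (T ∩ E)
    have h4 : (S ∩ E).card ≤ ((S ∩ E) ∪ (T ∩ E)).card :=
      Finset.card_le_card Finset.subset_union_left
    have h5 : (T ∩ E).card ≤ ((S ∩ E) ∪ (T ∩ E)).card :=
      Finset.card_le_card Finset.subset_union_right
    simp only [e1, e2, Nat.min_def]
    split_ifs <;> omega

/-- The closure `cl_M(S)` of a set in a matroid: all ground set elements whose
addition does not increase the rank. -/
def cl (M : FinMatroid α) (S : Finset α) : Finset α :=
  M.E.filter fun x => M.rk (insert x S) = M.rk S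

/-- The rank function of the free extension `M + e`. -/
def freeExtRk (M : FinMatroid α) (e : α) (S : Finset α) : ℕ :=
  if e ∈ S then
    (if M.cl (S.erase e) = M.E then M.rk (S.erase e) else M.rk (S.erase e) + 1)
  else M.rk S

/-- The free extension `M + e`, realized as the truncation of `M ⊕ U_{1,1}`. -/
def freeExtension (M : FinMatroid α) (e : α) (he : e ∉ M.E) : FinMatroid α :=
  truncation (M.directSum (freeM {e}) (Finset.disjoint_singleton_right.mpr he))

/-- Predicate expressing that `Z` is the (combinatorial) topological zeta function:
`Z` of the trivial matroid is `1` and `Z` satisfies the defining recurrence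
`Z_M(s) = (1/(|E|s + rk M)) ∑_{F proper flat} χ̄_{M/F}(1) ⬝ Z_{M|F}(s)`. -/
def IsTopZeta (Z : FinMatroid α → RatFunc ℚ) : Prop :=
  (∀ M : FinMatroid α, M.E = ∅ → Z M = 1) ∧
  (∀ M : FinMatroid α, M.E.Nonempty →
    Z M = (∑ F ∈ M.properFlats,
        RatFunc.C (M.redCharContractOne F) * Z (M.restrict F)) /
      ((M.E.card : RatFunc ℚ) * RatFunc.X + (M.rk M.E : RatFunc ℚ)))

/-- Predicate expressing that `μ M F` is the Möbius function value `μ(F, E)` in the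
lattice of flats of `M`: for every flat `F`, `∑_{G flat, F ⊆ G} μ(G,E) = δ_{F,E}`. -/
def IsFlatMobius (μ : FinMatroid α → Finset α → ℤ) : Prop :=
  ∀ (M : FinMatroid α) (F : Finset α), M.IsFlat F →
    (∑ G ∈ M.flats.filter fun G => F ⊆ G, μ M G) = if F = M.E then 1 else 0

/-- Predicate expressing that `Y` is the Möbius inversion of `Z`:
`Y_M(s) = ∑_{F ∈ L(M)} μ(F,E) Z_{M|F}(s)`. -/
def IsMobiusInv (μ : FinMatroid α → Finset α → ℤ)
    (Z Y : FinMatroid α → RatFunc ℚ) : Prop :=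
  ∀ M : FinMatroid α, Y M = ∑ F ∈ M.flats, (μ M F : RatFunc ℚ) * Z (M.restrict F)

/-- Predicate expressing that `Z` is the topological zeta function, viewed as an actual
function `ℝ → ℝ` (away from poles): base case `1` for the trivial matroid, and the
defining recurrence pointwise. -/
def IsTopZetaFun (Z : FinMatroid α → ℝ → ℝ) : Prop :=
  (∀ M : FinMatroid α, M.E = ∅ → Z M = fun _ => 1) ∧
  (∀ M : FinMatroid α, M.E.Nonempty → ∀ s : ℝ,
    Z M s = (∑ F ∈ M.properFlats, (M.redCharContractOne F : ℝ) * Z (M.restrict F) s) /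
      ((M.E.card : ℝ) * s + (M.rk M.E : ℝ)))

end FinMatroid
namespace FinMatroid

variable {α : Type*} [DecidableEq α]

lemma mem_flats_iff {M : FinMatroid α} {F : Finset α} : F ∈ M.flats ↔ M.IsFlat F := by
  simp only [flats, Finset.mem_filter, Finset.mem_powerset]
  exact ⟨fun h => h.2, fun h => ⟨h.1, h⟩⟩

lemma subset_of_mem_flats {M : FinMatroid α} {F : Finset α} (h : F ∈ M.flats) : F ⊆ M.E :=
  (mem_flats_iff.mp h).1

lemma top_mem_flats (M : FinMatroid α) : M.E ∈ M.flats :=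
  mem_flats_iff.mpr ⟨subset_rfl, fun x hx hx' => absurd hx hx'⟩

lemma restrict_E (M : FinMatroid α) (F : Finset α) : (M.restrict F).E = F := rfl
lemma restrict_rk (M : FinMatroid α) (F : Finset α) : (M.restrict F).rk = M.rk := rfl
lemma restrict_self (M : FinMatroid α) : M.restrict M.E = M := rfl

section DS
variable {M₁ M₂ : FinMatroid α}

lemma directSum_E (hd : Disjoint M₁.E M₂.E) : (M₁.directSum M₂ hd).E = M₁.E ∪ M₂.E := rfl
lemma directSum_rk (hd : Disjoint M₁.E M₂.E) (S : Finset α) :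
    (M₁.directSum M₂ hd).rk S = M₁.rk (S ∩ M₁.E) + M₂.rk (S ∩ M₂.E) := rfl

lemma inter_union_eq {F : Finset α} (hF : F ⊆ M₁.E ∪ M₂.E) :
    (F ∩ M₁.E) ∪ (F ∩ M₂.E) = F := by
  ext x; simp only [Finset.mem_union, Finset.mem_inter]
  constructor
  · tauto
  · intro hx; rcases Finset.mem_union.mp (hF hx) with h | h <;> tauto

lemma union_inter_left (hd : Disjoint M₁.E M₂.E) {F₁ F₂ : Finset α} (h₁ : F₁ ⊆ M₁.E) (h₂ : F₂ ⊆ M₂.E) :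
    (F₁ ∪ F₂) ∩ M₁.E = F₁ := by
  ext x; simp only [Finset.mem_inter, Finset.mem_union]
  constructor
  · rintro ⟨h | h, hx⟩
    · exact h
    · exact absurd hx (Finset.disjoint_right.mp hd (h₂ h))
  · intro hx; exact ⟨Or.inl hx, h₁ hx⟩

lemma union_inter_right (hd : Disjoint M₁.E M₂.E) {F₁ F₂ : Finset α} (h₁ : F₁ ⊆ M₁.E) (h₂ : F₂ ⊆ M₂.E) :
    (F₁ ∪ F₂) ∩ M₂.E = F₂ := by
  ext x; simp only [Finset.mem_inter, Finset.mem_union]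
  constructor
  · rintro ⟨h | h, hx⟩
    · exact absurd hx (Finset.disjoint_left.mp hd (h₁ h))
    · exact h
  · intro hx; exact ⟨Or.inr hx, h₂ hx⟩

lemma isFlat_directSum_iff (hd : Disjoint M₁.E M₂.E) {F : Finset α} :
    (M₁.directSum M₂ hd).IsFlat F ↔
      M₁.IsFlat (F ∩ M₁.E) ∧ M₂.IsFlat (F ∩ M₂.E) ∧ F ⊆ M₁.E ∪ M₂.E := by
  have key1 : ∀ x ∈ M₁.E, insert x F ∩ M₁.E = insert x (F ∩ M₁.E) := by
    intro x hx; ext y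
    simp only [Finset.mem_inter, Finset.mem_insert]
    constructor
    · rintro ⟨h | h, hy⟩ <;> tauto
    · rintro (h | ⟨h1, h2⟩)
      · exact ⟨Or.inl h, h ▸ hx⟩
      · exact ⟨Or.inr h1, h2⟩
  have key2 : ∀ x ∉ M₂.E, insert x F ∩ M₂.E = F ∩ M₂.E := by
    intro x hx; ext y
    simp only [Finset.mem_inter, Finset.mem_insert]
    constructor
    · rintro ⟨h | h, hy⟩
      · exact absurd (h ▸ hy) hx
      · exact ⟨h, hy⟩
    · tauto
  have key1' : ∀ x ∈ M₂.E, insert x F ∩ M₂.E = insert x (F ∩ M₂.E) := by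
    intro x hx; ext y
    simp only [Finset.mem_inter, Finset.mem_insert]
    constructor
    · rintro ⟨h | h, hy⟩ <;> tauto
    · rintro (h | ⟨h1, h2⟩)
      · exact ⟨Or.inl h, h ▸ hx⟩
      · exact ⟨Or.inr h1, h2⟩
  have key2' : ∀ x ∉ M₁.E, insert x F ∩ M₁.E = F ∩ M₁.E := by
    intro x hx; ext y
    simp only [Finset.mem_inter, Finset.mem_insert]
    constructor
    · rintro ⟨h | h, hy⟩
      · exact absurd (h ▸ hy) hx
      · exact ⟨h, hy⟩
    · tauto
  constructor
  · rintro ⟨hFE, hflat⟩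
    refine ⟨⟨Finset.inter_subset_right, ?_⟩, ⟨Finset.inter_subset_right, ?_⟩, hFE⟩
    · intro x hx hxF
      have hxF' : x ∉ F := fun h => hxF (Finset.mem_inter.mpr ⟨h, hx⟩)
      have hx2 : x ∉ M₂.E := Finset.disjoint_left.mp hd hx
      have := hflat x (Finset.mem_union_left _ hx) hxF'
      rw [directSum_rk, directSum_rk, key1 x hx, key2 x hx2] at this
      omega
    · intro x hx hxF
      have hxF' : x ∉ F := fun h => hxF (Finset.mem_inter.mpr ⟨h, hx⟩)
      have hx1 : x ∉ M₁.E := Finset.disjoint_right.mp hd hx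
      have := hflat x (Finset.mem_union_right _ hx) hxF'
      rw [directSum_rk, directSum_rk, key1' x hx, key2' x hx1] at this
      omega
  · rintro ⟨⟨_, h1⟩, ⟨_, h2⟩, hFE⟩
    refine ⟨hFE, fun x hx hxF => ?_⟩
    rcases Finset.mem_union.mp hx with hx1 | hx2
    · have hx2 : x ∉ M₂.E := Finset.disjoint_left.mp hd hx1
      have hxF1 : x ∉ F ∩ M₁.E := fun h => hxF (Finset.mem_inter.mp h).1
      have := h1 x hx1 hxF1
      rw [directSum_rk, directSum_rk, key1 x hx1, key2 x hx2]
      omega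
    · have hx1 : x ∉ M₁.E := Finset.disjoint_right.mp hd hx2
      have hxF2 : x ∉ F ∩ M₂.E := fun h => hxF (Finset.mem_inter.mp h).1
      have := h2 x hx2 hxF2
      rw [directSum_rk, directSum_rk, key1' x hx2, key2' x hx1]
      omega

lemma union_mem_flats_directSum (hd : Disjoint M₁.E M₂.E) {F₁ F₂ : Finset α}
    (h₁ : F₁ ∈ M₁.flats) (h₂ : F₂ ∈ M₂.flats) :
    F₁ ∪ F₂ ∈ (M₁.directSum M₂ hd).flats := by
  rw [mem_flats_iff, isFlat_directSum_iff hd,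
    union_inter_left hd (subset_of_mem_flats h₁) (subset_of_mem_flats h₂),
    union_inter_right hd (subset_of_mem_flats h₁) (subset_of_mem_flats h₂)]
  exact ⟨mem_flats_iff.mp h₁, mem_flats_iff.mp h₂,
    Finset.union_subset_union (subset_of_mem_flats h₁) (subset_of_mem_flats h₂)⟩

lemma sum_flats_directSum (hd : Disjoint M₁.E M₂.E) {β : Type*} [AddCommMonoid β] (f : Finset α → β) :
    ∑ F ∈ (M₁.directSum M₂ hd).flats, f F
      = ∑ F₁ ∈ M₁.flats, ∑ F₂ ∈ M₂.flats, f (F₁ ∪ F₂) := by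
  rw [← Finset.sum_product']
  refine Finset.sum_bij' (fun F _ => (F ∩ M₁.E, F ∩ M₂.E)) (fun p _ => p.1 ∪ p.2)
    ?_ ?_ ?_ ?_ ?_
  · intro F hF
    obtain ⟨hf1, hf2, _⟩ := (isFlat_directSum_iff hd).mp (mem_flats_iff.mp hF)
    exact Finset.mk_mem_product (mem_flats_iff.mpr hf1) (mem_flats_iff.mpr hf2)
  · intro p hp
    obtain ⟨h1, h2⟩ := Finset.mem_product.mp hp
    exact union_mem_flats_directSum hd h1 h2
  · intro F hF
    show (F ∩ M₁.E) ∪ (F ∩ M₂.E) = F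
    exact inter_union_eq (subset_of_mem_flats hF)
  · intro p hp
    obtain ⟨h1, h2⟩ := Finset.mem_product.mp hp
    rw [union_inter_left hd (subset_of_mem_flats h1) (subset_of_mem_flats h2),
      union_inter_right hd (subset_of_mem_flats h1) (subset_of_mem_flats h2)]
  · intro F hF
    dsimp only
    rw [inter_union_eq (subset_of_mem_flats hF)]

end DS
end FinMatroid
namespace FinMatroid

variable {α : Type*} [DecidableEq α]

lemma sum_powerset_union_disjoint {A B : Finset α} (h : Disjoint A B)
    {β : Type*} [AddCommMonoid β] (f : Finset α → β) :
    ∑ S ∈ (A ∪ B).powerset, f S = ∑ S₁ ∈ A.powerset, ∑ S₂ ∈ B.powerset, f (S₁ ∪ S₂) := by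
  rw [← Finset.sum_product']
  refine Finset.sum_bij' (fun S _ => (S ∩ A, S ∩ B)) (fun p _ => p.1 ∪ p.2) ?_ ?_ ?_ ?_ ?_
  · intro S hS
    rw [Finset.mem_powerset] at hS
    exact Finset.mk_mem_product (Finset.mem_powerset.mpr Finset.inter_subset_right)
      (Finset.mem_powerset.mpr Finset.inter_subset_right)
  · intro p hp
    obtain ⟨h1, h2⟩ := Finset.mem_product.mp hp
    rw [Finset.mem_powerset] at h1 h2 ⊢
    exact Finset.union_subset_union h1 h2
  · intro S hS
    rw [Finset.mem_powerset] at hS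
    show (S ∩ A) ∪ (S ∩ B) = S
    rw [← Finset.inter_union_distrib_left, Finset.inter_eq_left.mpr hS]
  · intro p hp
    obtain ⟨h1, h2⟩ := Finset.mem_product.mp hp
    rw [Finset.mem_powerset] at h1 h2
    have e1 : (p.1 ∪ p.2) ∩ A = p.1 := by
      ext x
      simp only [Finset.mem_inter, Finset.mem_union]
      constructor
      · rintro ⟨hx | hx, hA⟩
        · exact hx
        · exact absurd hA (Finset.disjoint_right.mp h (h2 hx))
      · intro hx; exact ⟨Or.inl hx, h1 hx⟩
    have e2 : (p.1 ∪ p.2) ∩ B = p.2 := by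
      ext x
      simp only [Finset.mem_inter, Finset.mem_union]
      constructor
      · rintro ⟨hx | hx, hB⟩
        · exact absurd hB (Finset.disjoint_left.mp h (h1 hx))
        · exact hx
      · intro hx; exact ⟨Or.inr hx, h2 hx⟩
    rw [e1, e2]
  · intro S hS
    rw [Finset.mem_powerset] at hS
    dsimp only
    rw [← Finset.inter_union_distrib_left, Finset.inter_eq_left.mpr hS]

lemma charPolyAux_congr {E : Finset α} {g g' : Finset α → ℕ}
    (h : ∀ S ⊆ E, g S = g' S) : charPolyAux E g = charPolyAux E g' := by
  unfold charPolyAux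
  refine Finset.sum_congr rfl fun S hS => ?_
  rw [Finset.mem_powerset] at hS
  rw [h S hS, h E subset_rfl]

lemma charPolyAux_empty (g : Finset α → ℕ) : charPolyAux (∅ : Finset α) g = 1 := by
  unfold charPolyAux
  simp

lemma charPolyAux_mul {A B : Finset α} (h : Disjoint A B) {gA gB : Finset α → ℕ}
    (hA : ∀ S ⊆ A, gA S ≤ gA A) (hB : ∀ S ⊆ B, gB S ≤ gB B) :
    charPolyAux (A ∪ B) (fun S => gA (S ∩ A) + gB (S ∩ B))
      = charPolyAux A gA * charPolyAux B gB := by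
  unfold charPolyAux
  rw [Finset.sum_mul_sum, sum_powerset_union_disjoint h]
  refine Finset.sum_congr rfl fun S₁ hS₁ => Finset.sum_congr rfl fun S₂ hS₂ => ?_
  rw [Finset.mem_powerset] at hS₁ hS₂
  have e1 : (S₁ ∪ S₂) ∩ A = S₁ := by
    ext x
    simp only [Finset.mem_inter, Finset.mem_union]
    constructor
    · rintro ⟨hx | hx, hA⟩
      · exact hx
      · exact absurd hA (Finset.disjoint_right.mp h (hS₂ hx))
    · intro hx; exact ⟨Or.inl hx, hS₁ hx⟩
  have e2 : (S₁ ∪ S₂) ∩ B = S₂ := by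
    ext x
    simp only [Finset.mem_inter, Finset.mem_union]
    constructor
    · rintro ⟨hx | hx, hB⟩
      · exact absurd hB (Finset.disjoint_left.mp h (hS₁ hx))
      · exact hx
    · intro hx; exact ⟨Or.inr hx, hS₂ hx⟩
  have e3 : (A ∪ B) ∩ A = A := Finset.inter_eq_right.mpr Finset.subset_union_left
  have e4 : (A ∪ B) ∩ B = B := Finset.inter_eq_right.mpr Finset.subset_union_right
  have hcard : (S₁ ∪ S₂).card = S₁.card + S₂.card :=
    Finset.card_union_of_disjoint (h.mono hS₁ hS₂)
  have hexp : gA ((A ∪ B) ∩ A) + gB ((A ∪ B) ∩ B) - (gA ((S₁ ∪ S₂) ∩ A) + gB ((S₁ ∪ S₂) ∩ B))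
      = (gA A - gA S₁) + (gB B - gB S₂) := by
    rw [e1, e2, e3, e4]
    have := hA S₁ hS₁; have := hB S₂ hS₂; omega
  rw [hexp, hcard, pow_add, pow_add]
  ring

lemma contractCharPoly_directSum {M₁ M₂ : FinMatroid α} (hd : Disjoint M₁.E M₂.E)
    {F₁ F₂ : Finset α} (h₁ : F₁ ⊆ M₁.E) (h₂ : F₂ ⊆ M₂.E) :
    (M₁.directSum M₂ hd).contractCharPoly (F₁ ∪ F₂)
      = M₁.contractCharPoly F₁ * M₂.contractCharPoly F₂ := by
  unfold contractCharPoly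
  have hE : (M₁.directSum M₂ hd).E \ (F₁ ∪ F₂) = (M₁.E \ F₁) ∪ (M₂.E \ F₂) := by
    show (M₁.E ∪ M₂.E) \ (F₁ ∪ F₂) = _
    ext x
    simp only [Finset.mem_sdiff, Finset.mem_union]
    constructor
    · rintro ⟨h | h, hn⟩
      · exact Or.inl ⟨h, fun hx => hn (Or.inl hx)⟩
      · exact Or.inr ⟨h, fun hx => hn (Or.inr hx)⟩
    · rintro (⟨h, hn⟩ | ⟨h, hn⟩)
      · refine ⟨Or.inl h, ?_⟩
        rintro (hx | hx)
        · exact hn hx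
        · exact absurd h (Finset.disjoint_right.mp hd (h₂ hx))
      · refine ⟨Or.inr h, ?_⟩
        rintro (hx | hx)
        · exact absurd h (Finset.disjoint_left.mp hd (h₁ hx))
        · exact hn hx
  rw [hE]
  have hdisj : Disjoint (M₁.E \ F₁) (M₂.E \ F₂) :=
    hd.mono (Finset.sdiff_subset) (Finset.sdiff_subset)
  rw [← charPolyAux_mul hdisj
    (gA := fun T => M₁.rk (T ∪ F₁) - M₁.rk F₁) (gB := fun T => M₂.rk (T ∪ F₂) - M₂.rk F₂)
    (fun S hS => by
      exact Nat.sub_le_sub_right (M₁.rk_mono (Finset.union_subset_union hS subset_rfl)) _)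
    (fun S hS => by
      exact Nat.sub_le_sub_right (M₂.rk_mono (Finset.union_subset_union hS subset_rfl)) _)]
  refine charPolyAux_congr fun S hS => ?_
  have eS1 : S ∩ (M₁.E \ F₁) = S ∩ M₁.E := by
    ext x
    simp only [Finset.mem_inter, Finset.mem_sdiff]
    refine ⟨fun hx => ⟨hx.1, hx.2.1⟩, fun hx => ⟨hx.1, hx.2, fun hF => ?_⟩⟩
    rcases Finset.mem_union.mp (hS hx.1) with h | h
    · exact (Finset.mem_sdiff.mp h).2 hF
    · exact Finset.disjoint_right.mp hd ((Finset.mem_sdiff.mp h).1) hx.2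
  have eS2 : S ∩ (M₂.E \ F₂) = S ∩ M₂.E := by
    ext x
    simp only [Finset.mem_inter, Finset.mem_sdiff]
    refine ⟨fun hx => ⟨hx.1, hx.2.1⟩, fun hx => ⟨hx.1, hx.2, fun hF => ?_⟩⟩
    rcases Finset.mem_union.mp (hS hx.1) with h | h
    · exact Finset.disjoint_left.mp hd ((Finset.mem_sdiff.mp h).1) hx.2
    · exact (Finset.mem_sdiff.mp h).2 hF
  have e1 : (S ∪ (F₁ ∪ F₂)) ∩ M₁.E = (S ∩ M₁.E) ∪ F₁ := by
    ext x
    simp only [Finset.mem_inter, Finset.mem_union]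
    constructor
    · rintro ⟨h | h | h, hx⟩
      · exact Or.inl ⟨h, hx⟩
      · exact Or.inr h
      · exact absurd hx (Finset.disjoint_right.mp hd (h₂ h))
    · rintro (⟨h, hx⟩ | h)
      · exact ⟨Or.inl h, hx⟩
      · exact ⟨Or.inr (Or.inl h), h₁ h⟩
  have e2 : (S ∪ (F₁ ∪ F₂)) ∩ M₂.E = (S ∩ M₂.E) ∪ F₂ := by
    ext x
    simp only [Finset.mem_inter, Finset.mem_union]
    constructor
    · rintro ⟨h | h | h, hx⟩
      · exact Or.inl ⟨h, hx⟩
      · exact absurd hx (Finset.disjoint_left.mp hd (h₁ h))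
      · exact Or.inr h
    · rintro (⟨h, hx⟩ | h)
      · exact ⟨Or.inl h, hx⟩
      · exact ⟨Or.inr (Or.inr h), h₂ h⟩
  have eF1 : (F₁ ∪ F₂) ∩ M₁.E = F₁ := union_inter_left hd h₁ h₂
  have eF2 : (F₁ ∪ F₂) ∩ M₂.E = F₂ := union_inter_right hd h₁ h₂
  show (M₁.directSum M₂ hd).rk (S ∪ (F₁ ∪ F₂)) - (M₁.directSum M₂ hd).rk (F₁ ∪ F₂)
      = (M₁.rk ((S ∩ (M₁.E \ F₁)) ∪ F₁) - M₁.rk F₁) + (M₂.rk ((S ∩ (M₂.E \ F₂)) ∪ F₂) - M₂.rk F₂)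
  rw [eS1, eS2, directSum_rk, directSum_rk, e1, e2, eF1, eF2]
  have m1 : M₁.rk F₁ ≤ M₁.rk ((S ∩ M₁.E) ∪ F₁) := M₁.rk_mono Finset.subset_union_right
  have m2 : M₂.rk F₂ ≤ M₂.rk ((S ∩ M₂.E) ∪ F₂) := M₂.rk_mono Finset.subset_union_right
  omega

lemma charPolyAux_eval_one {E : Finset α} (hE : E.Nonempty) (g : Finset α → ℕ) :
    (charPolyAux E g).eval 1 = 0 := by
  unfold charPolyAux
  rw [Polynomial.eval_finset_sum]
  simp only [Polynomial.eval_mul, Polynomial.eval_pow, Polynomial.eval_neg,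
    Polynomial.eval_one, Polynomial.eval_X, one_pow, mul_one]
  have := Finset.sum_powerset_neg_one_pow_card_of_nonempty (x := E) hE
  exact_mod_cast this

lemma reducedCharPoly_eval_one_eq_zero {p q : Polynomial ℚ}
    (hp : p.eval 1 = 0) (hq : q.eval 1 = 0) :
    (reducedCharPoly (p * q)).eval 1 = 0 := by
  obtain ⟨p', hp'⟩ : (X - C 1) ∣ p := Polynomial.dvd_iff_isRoot.mpr hp
  obtain ⟨q', hq'⟩ : (X - C 1) ∣ q := Polynomial.dvd_iff_isRoot.mpr hq
  have : p * q = (X - C 1) * ((X - C 1) * p' * q') := by rw [hp', hq']; ring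
  rw [reducedCharPoly, this, Polynomial.mul_divByMonic_cancel_left _ (Polynomial.monic_X_sub_C 1)]
  simp

lemma redCharContractOne_eq_zero_of_ne {M₁ M₂ : FinMatroid α} (hd : Disjoint M₁.E M₂.E)
    {F₁ F₂ : Finset α} (h₁ : F₁ ⊆ M₁.E) (h₂ : F₂ ⊆ M₂.E)
    (hne₁ : F₁ ≠ M₁.E) (hne₂ : F₂ ≠ M₂.E) :
    (M₁.directSum M₂ hd).redCharContractOne (F₁ ∪ F₂) = 0 := by
  rw [redCharContractOne, contractCharPoly_directSum hd h₁ h₂]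
  have hn1 : (M₁.E \ F₁).Nonempty := by
    rw [Finset.sdiff_nonempty]
    exact fun h => hne₁ (subset_antisymm h₁ h)
  have hn2 : (M₂.E \ F₂).Nonempty := by
    rw [Finset.sdiff_nonempty]
    exact fun h => hne₂ (subset_antisymm h₂ h)
  exact reducedCharPoly_eval_one_eq_zero (charPolyAux_eval_one hn1 _)
    (charPolyAux_eval_one hn2 _)

lemma contractCharPoly_self (M : FinMatroid α) : M.contractCharPoly M.E = 1 := by
  rw [contractCharPoly, Finset.sdiff_self, charPolyAux_empty]

lemma redCharContractOne_left {M₁ M₂ : FinMatroid α} (hd : Disjoint M₁.E M₂.E)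
    {F₁ : Finset α} (h₁ : F₁ ⊆ M₁.E) :
    (M₁.directSum M₂ hd).redCharContractOne (F₁ ∪ M₂.E) = M₁.redCharContractOne F₁ := by
  rw [redCharContractOne, redCharContractOne,
    contractCharPoly_directSum hd h₁ subset_rfl, contractCharPoly_self, mul_one]

lemma redCharContractOne_right {M₁ M₂ : FinMatroid α} (hd : Disjoint M₁.E M₂.E)
    {F₂ : Finset α} (h₂ : F₂ ⊆ M₂.E) :
    (M₁.directSum M₂ hd).redCharContractOne (M₁.E ∪ F₂) = M₂.redCharContractOne F₂ := by
  rw [redCharContractOne, redCharContractOne,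
    contractCharPoly_directSum hd subset_rfl h₂, contractCharPoly_self, one_mul]

end FinMatroid
namespace FinMatroid

variable {α : Type*} [DecidableEq α]

lemma isFlat_congr {M M' : FinMatroid α} (hE : M.E = M'.E)
    (hrk : ∀ S ⊆ M.E, M.rk S = M'.rk S) {F : Finset α} (hF : F ⊆ M.E) :
    M.IsFlat F ↔ M'.IsFlat F := by
  have h1 : M.rk F = M'.rk F := hrk F hF
  constructor
  · intro h
    refine ⟨hE ▸ h.1, fun x hx hxF => ?_⟩
    rw [← hE] at hx
    have := h.2 x hx hxF
    rwa [h1, hrk _ (Finset.insert_subset hx hF)] at this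
  · intro h
    refine ⟨hF, fun x hx hxF => ?_⟩
    have := h.2 x (hE ▸ hx) hxF
    rwa [← h1, ← hrk _ (Finset.insert_subset hx hF)] at this

lemma flats_congr {M M' : FinMatroid α} (hE : M.E = M'.E)
    (hrk : ∀ S ⊆ M.E, M.rk S = M'.rk S) : M.flats = M'.flats := by
  unfold flats
  rw [← hE]
  exact Finset.filter_congr fun F hF =>
    isFlat_congr hE hrk (Finset.mem_powerset.mp hF)

lemma properFlats_congr {M M' : FinMatroid α} (hE : M.E = M'.E)
    (hrk : ∀ S ⊆ M.E, M.rk S = M'.rk S) : M.properFlats = M'.properFlats := by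
  unfold properFlats
  rw [flats_congr hE hrk, hE]

lemma redCharContractOne_congr {M M' : FinMatroid α} (hE : M.E = M'.E)
    (hrk : ∀ S ⊆ M.E, M.rk S = M'.rk S) {F : Finset α} (hF : F ⊆ M.E) :
    M.redCharContractOne F = M'.redCharContractOne F := by
  unfold redCharContractOne contractCharPoly
  rw [← hE]
  congr 2
  refine charPolyAux_congr fun S hS => ?_
  have hSF : S ∪ F ⊆ M.E := Finset.union_subset (hS.trans Finset.sdiff_subset) hF
  rw [hrk _ hSF, hrk _ hF]

lemma Z_congr {Z : FinMatroid α → RatFunc ℚ} (hZ : IsTopZeta Z) :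
    ∀ (n : ℕ) (M M' : FinMatroid α), M.E.card ≤ n → M.E = M'.E →
      (∀ S ⊆ M.E, M.rk S = M'.rk S) → Z M = Z M' := by
  intro n
  induction n with
  | zero =>
    intro M M' hc hE hrk
    have h0 : M.E = ∅ := Finset.card_eq_zero.mp (Nat.le_zero.mp hc)
    rw [hZ.1 M h0, hZ.1 M' (hE ▸ h0)]
  | succ n ih =>
    intro M M' hc hE hrk
    rcases Finset.eq_empty_or_nonempty M.E with h0 | hne
    · rw [hZ.1 M h0, hZ.1 M' (hE ▸ h0)]
    · rw [hZ.2 M hne, hZ.2 M' (hE ▸ hne)]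
      rw [← hE, ← hrk M.E subset_rfl, ← properFlats_congr hE hrk]
      congr 1
      refine Finset.sum_congr rfl fun F hF => ?_
      have hFflat : F ∈ M.flats := Finset.mem_filter.mp hF |>.1
      have hFne : F ≠ M.E := (Finset.mem_filter.mp hF).2
      have hFsub : F ⊆ M.E := subset_of_mem_flats hFflat
      have hFlt : F.card ≤ n := by
        have := Finset.card_lt_card (Finset.ssubset_iff_subset_ne.mpr ⟨hFsub, hFne⟩)
        omega
      rw [redCharContractOne_congr hE hrk hFsub]
      congr 1
      exact ih (M.restrict F) (M'.restrict F) hFlt rfl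
        (fun S hS => hrk S (hS.trans hFsub))

lemma denom_ne_zero {n : ℕ} (hn : n ≠ 0) (r : ℕ) :
    ((n : RatFunc ℚ) * RatFunc.X + (r : RatFunc ℚ)) ≠ 0 := by
  have key : ((n : RatFunc ℚ) * RatFunc.X + (r : RatFunc ℚ))
      = algebraMap (Polynomial ℚ) (RatFunc ℚ)
        ((n : Polynomial ℚ) * Polynomial.X + (r : Polynomial ℚ)) := by
    rw [map_add, map_mul, map_natCast, map_natCast, RatFunc.algebraMap_X]
  rw [key]
  intro h
  have h2 : ((n : Polynomial ℚ) * Polynomial.X + (r : Polynomial ℚ)) = 0 := by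
    apply RatFunc.algebraMap_injective
    rw [h, map_zero]
  have e1 := congrArg (Polynomial.eval 1) h2
  have e0 := congrArg (Polynomial.eval 0) h2
  simp only [Polynomial.eval_add, Polynomial.eval_mul, Polynomial.eval_natCast,
    Polynomial.eval_X, Polynomial.eval_zero, mul_one, mul_zero, zero_add] at e1 e0
  have h3 : (n : ℚ) = 0 := by linarith
  exact hn (by exact_mod_cast h3)

lemma union_eq_iff {M₁ M₂ : FinMatroid α} (hd : Disjoint M₁.E M₂.E)
    {F₁ F₂ : Finset α} (h₁ : F₁ ⊆ M₁.E) (h₂ : F₂ ⊆ M₂.E) :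
    F₁ ∪ F₂ = M₁.E ∪ M₂.E ↔ F₁ = M₁.E ∧ F₂ = M₂.E := by
  constructor
  · intro h
    constructor
    · rw [← union_inter_left hd h₁ h₂, h, union_inter_left hd subset_rfl subset_rfl]
    · rw [← union_inter_right hd h₁ h₂, h, union_inter_right hd subset_rfl subset_rfl]
  · rintro ⟨rfl, rfl⟩; rfl

lemma Z_restrict_union {Z : FinMatroid α → RatFunc ℚ} (hZ : IsTopZeta Z)
    {M₁ M₂ : FinMatroid α} (hd : Disjoint M₁.E M₂.E)
    {F₁ F₂ : Finset α} (h₁ : F₁ ⊆ M₁.E) (h₂ : F₂ ⊆ M₂.E) :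
    Z ((M₁.directSum M₂ hd).restrict (F₁ ∪ F₂))
      = Z ((M₁.restrict F₁).directSum (M₂.restrict F₂) (hd.mono h₁ h₂)) := by
  refine Z_congr hZ (F₁ ∪ F₂).card _ _ le_rfl rfl fun S hS => ?_
  show (M₁.directSum M₂ hd).rk S
      = ((M₁.restrict F₁).directSum (M₂.restrict F₂) (hd.mono h₁ h₂)).rk S
  rw [directSum_rk, directSum_rk]
  have e1 : S ∩ F₁ = S ∩ M₁.E := by
    ext x
    simp only [Finset.mem_inter]
    refine ⟨fun hx => ⟨hx.1, h₁ hx.2⟩, fun hx => ⟨hx.1, ?_⟩⟩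
    rcases Finset.mem_union.mp (hS hx.1) with h | h
    · exact h
    · exact absurd hx.2 (Finset.disjoint_right.mp hd (h₂ h))
  have e2 : S ∩ F₂ = S ∩ M₂.E := by
    ext x
    simp only [Finset.mem_inter]
    refine ⟨fun hx => ⟨hx.1, h₂ hx.2⟩, fun hx => ⟨hx.1, ?_⟩⟩
    rcases Finset.mem_union.mp (hS hx.1) with h | h
    · exact absurd hx.2 (Finset.disjoint_left.mp hd (h₁ h))
    · exact h
  show M₁.rk (S ∩ M₁.E) + M₂.rk (S ∩ M₂.E) = M₁.rk (S ∩ F₁) + M₂.rk (S ∩ F₂)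
  rw [e1, e2]

lemma Z_directSum_of_left_empty {Z : FinMatroid α → RatFunc ℚ} (hZ : IsTopZeta Z)
    {M₁ M₂ : FinMatroid α} (hd : Disjoint M₁.E M₂.E) (h : M₁.E = ∅) :
    Z (M₁.directSum M₂ hd) = Z M₁ * Z M₂ := by
  rw [hZ.1 M₁ h, one_mul]
  refine Z_congr hZ (M₁.directSum M₂ hd).E.card _ _ le_rfl ?_ fun S hS => ?_
  · show M₁.E ∪ M₂.E = M₂.E
    rw [h, Finset.empty_union]
  · rw [directSum_rk, h]
    simp only [Finset.inter_empty, M₁.rk_empty, zero_add]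
    congr 1
    rw [directSum_E, h, Finset.empty_union] at hS
    exact Finset.inter_eq_left.mpr hS

lemma Z_directSum_of_right_empty {Z : FinMatroid α → RatFunc ℚ} (hZ : IsTopZeta Z)
    {M₁ M₂ : FinMatroid α} (hd : Disjoint M₁.E M₂.E) (h : M₂.E = ∅) :
    Z (M₁.directSum M₂ hd) = Z M₁ * Z M₂ := by
  rw [hZ.1 M₂ h, mul_one]
  refine Z_congr hZ (M₁.directSum M₂ hd).E.card _ _ le_rfl ?_ fun S hS => ?_
  · show M₁.E ∪ M₂.E = M₁.E
    rw [h, Finset.union_empty]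
  · rw [directSum_rk, h]
    simp only [Finset.inter_empty, M₂.rk_empty, add_zero]
    congr 1
    rw [directSum_E, h, Finset.union_empty] at hS
    exact Finset.inter_eq_left.mpr hS

lemma Z_directSum {Z : FinMatroid α → RatFunc ℚ} (hZ : IsTopZeta Z) :
    ∀ (n : ℕ) (M₁ M₂ : FinMatroid α) (hd : Disjoint M₁.E M₂.E),
      (M₁.E ∪ M₂.E).card ≤ n → Z (M₁.directSum M₂ hd) = Z M₁ * Z M₂ := by
  intro n
  induction n with
  | zero =>
    intro M₁ M₂ hd hc
    have h0 : M₁.E ∪ M₂.E = ∅ := Finset.card_eq_zero.mp (Nat.le_zero.mp hc)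
    exact Z_directSum_of_left_empty hZ hd (Finset.union_eq_empty.mp h0).1
  | succ n ih =>
    intro M₁ M₂ hd hc
    rcases Finset.eq_empty_or_nonempty M₁.E with h1 | hne₁
    · exact Z_directSum_of_left_empty hZ hd h1
    rcases Finset.eq_empty_or_nonempty M₂.E with h2 | hne₂
    · exact Z_directSum_of_right_empty hZ hd h2
    set M := M₁.directSum M₂ hd with hM
    have hne : M.E.Nonempty := by
      rw [directSum_E]
      exact hne₁.mono Finset.subset_union_left
    have hS₁ : ∑ F ∈ M₁.properFlats, RatFunc.C (M₁.redCharContractOne F) * Z (M₁.restrict F)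
        = Z M₁ * ((M₁.E.card : RatFunc ℚ) * RatFunc.X + (M₁.rk M₁.E : RatFunc ℚ)) :=
      (div_eq_iff (denom_ne_zero (by simpa using hne₁.card_ne_zero) _)).mp
        (hZ.2 M₁ hne₁).symm
    have hS₂ : ∑ F ∈ M₂.properFlats, RatFunc.C (M₂.redCharContractOne F) * Z (M₂.restrict F)
        = Z M₂ * ((M₂.E.card : RatFunc ℚ) * RatFunc.X + (M₂.rk M₂.E : RatFunc ℚ)) :=
      (div_eq_iff (denom_ne_zero (by simpa using hne₂.card_ne_zero) _)).mp
        (hZ.2 M₂ hne₂).symm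
    rw [hZ.2 M hne, div_eq_iff (denom_ne_zero (by simpa using hne.card_ne_zero) _)]
    -- rewrite the sum over proper flats as a double sum
    have hsum : ∑ F ∈ M.properFlats, RatFunc.C (M.redCharContractOne F) * Z (M.restrict F)
        = ∑ F₁ ∈ M₁.flats, ∑ F₂ ∈ M₂.flats,
            (if F₁ ∪ F₂ ≠ M.E then RatFunc.C (M.redCharContractOne (F₁ ∪ F₂))
              * Z (M.restrict (F₁ ∪ F₂)) else 0) := by
      rw [properFlats, Finset.sum_filter]
      exact sum_flats_directSum hd _
    rw [hsum]
    have hMe : M.E = M₁.E ∪ M₂.E := rfl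
    -- evaluate each term
    have hterm : ∀ F₁ ∈ M₁.flats, ∀ F₂ ∈ M₂.flats,
        (if F₁ ∪ F₂ ≠ M.E then RatFunc.C (M.redCharContractOne (F₁ ∪ F₂))
            * Z (M.restrict (F₁ ∪ F₂)) else 0)
        = (if F₂ = M₂.E then (if F₁ ≠ M₁.E then
              RatFunc.C (M₁.redCharContractOne F₁) * Z (M₁.restrict F₁) * Z M₂ else 0) else 0)
          + (if F₁ = M₁.E then (if F₂ ≠ M₂.E then
              Z M₁ * (RatFunc.C (M₂.redCharContractOne F₂) * Z (M₂.restrict F₂)) else 0)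
            else 0) := by
      intro F₁ hF₁ F₂ hF₂
      have hs₁ : F₁ ⊆ M₁.E := subset_of_mem_flats hF₁
      have hs₂ : F₂ ⊆ M₂.E := subset_of_mem_flats hF₂
      have hcard : (F₁ ∪ F₂ ≠ M.E) → (F₁ ∪ F₂).card ≤ n := by
        intro hne'
        have hss : F₁ ∪ F₂ ⊂ M₁.E ∪ M₂.E :=
          Finset.ssubset_iff_subset_ne.mpr
            ⟨Finset.union_subset_union hs₁ hs₂, fun h => hne' (hMe ▸ h)⟩
        have := Finset.card_lt_card hss
        omega
      by_cases e₁ : F₁ = M₁.E <;> by_cases e₂ : F₂ = M₂.E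
      · subst e₁; subst e₂
        simp [hMe]
      · subst e₁
        have hne' : M₁.E ∪ F₂ ≠ M.E := fun h =>
          e₂ ((union_eq_iff hd subset_rfl hs₂).mp (hMe ▸ h)).2
        rw [if_pos hne', if_neg e₂, if_pos rfl, if_pos e₂, zero_add]
        rw [hM, redCharContractOne_right hd hs₂, Z_restrict_union hZ hd subset_rfl hs₂,
          ih _ _ _ (hcard hne'), restrict_self]
        ring
      · subst e₂
        have hne' : F₁ ∪ M₂.E ≠ M.E := fun h =>
          e₁ ((union_eq_iff hd hs₁ subset_rfl).mp (hMe ▸ h)).1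
        rw [if_pos hne', if_pos rfl, if_pos e₁, if_neg e₁, add_zero]
        rw [hM, redCharContractOne_left hd hs₁, Z_restrict_union hZ hd hs₁ subset_rfl,
          ih _ _ _ (hcard hne'), restrict_self]
        ring
      · have hne' : F₁ ∪ F₂ ≠ M.E := fun h =>
          e₁ ((union_eq_iff hd hs₁ hs₂).mp (hMe ▸ h)).1
        rw [if_pos hne', if_neg e₂, if_neg e₁, add_zero]
        rw [hM, redCharContractOne_eq_zero_of_ne hd hs₁ hs₂ e₁ e₂]
        simp
    rw [Finset.sum_congr rfl (fun F₁ hF₁ => Finset.sum_congr rfl (hterm F₁ hF₁))]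
    simp only [Finset.sum_add_distrib]
    have h1 : ∑ F₁ ∈ M₁.flats, ∑ F₂ ∈ M₂.flats,
        (if F₂ = M₂.E then (if F₁ ≠ M₁.E then
          RatFunc.C (M₁.redCharContractOne F₁) * Z (M₁.restrict F₁) * Z M₂ else 0) else 0)
        = Z M₁ * ((M₁.E.card : RatFunc ℚ) * RatFunc.X + (M₁.rk M₁.E : RatFunc ℚ)) * Z M₂ := by
      have step : ∀ F₁ ∈ M₁.flats, ∑ F₂ ∈ M₂.flats,
          (if F₂ = M₂.E then (if F₁ ≠ M₁.E then
            RatFunc.C (M₁.redCharContractOne F₁) * Z (M₁.restrict F₁) * Z M₂ else 0) else 0)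
          = (if F₁ ≠ M₁.E then
            RatFunc.C (M₁.redCharContractOne F₁) * Z (M₁.restrict F₁) * Z M₂ else 0) := by
        intro F₁ _
        rw [Finset.sum_ite_eq' M₂.flats M₂.E, if_pos (top_mem_flats M₂)]
      rw [Finset.sum_congr rfl step, ← Finset.sum_filter]
      show ∑ F₁ ∈ M₁.properFlats, _ = _
      rw [← Finset.sum_mul, hS₁]
    have h2 : ∑ F₁ ∈ M₁.flats, ∑ F₂ ∈ M₂.flats,
        (if F₁ = M₁.E then (if F₂ ≠ M₂.E then
          Z M₁ * (RatFunc.C (M₂.redCharContractOne F₂) * Z (M₂.restrict F₂)) else 0) else 0)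
        = Z M₁ * (Z M₂ * ((M₂.E.card : RatFunc ℚ) * RatFunc.X + (M₂.rk M₂.E : RatFunc ℚ))) := by
      have step : ∀ F₁ ∈ M₁.flats, ∑ F₂ ∈ M₂.flats,
          (if F₁ = M₁.E then (if F₂ ≠ M₂.E then
            Z M₁ * (RatFunc.C (M₂.redCharContractOne F₂) * Z (M₂.restrict F₂)) else 0) else 0)
          = (if F₁ = M₁.E then ∑ F₂ ∈ M₂.flats, (if F₂ ≠ M₂.E then
            Z M₁ * (RatFunc.C (M₂.redCharContractOne F₂) * Z (M₂.restrict F₂)) else 0)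
            else 0) := by
        intro F₁ _
        split_ifs <;> simp
      rw [Finset.sum_congr rfl step, Finset.sum_ite_eq' M₁.flats M₁.E,
        if_pos (top_mem_flats M₁), ← Finset.sum_filter]
      show ∑ F₂ ∈ M₂.properFlats, _ = _
      rw [← Finset.mul_sum, hS₂]
    rw [h1, h2]
    have hc' : (M.E.card : RatFunc ℚ) = (M₁.E.card : RatFunc ℚ) + (M₂.E.card : RatFunc ℚ) := by
      rw [hMe, Finset.card_union_of_disjoint hd]
      push_cast
      ring
    have hr' : (M.rk M.E : RatFunc ℚ) = (M₁.rk M₁.E : RatFunc ℚ) + (M₂.rk M₂.E : RatFunc ℚ) := by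
      have : M.rk M.E = M₁.rk M₁.E + M₂.rk M₂.E := by
        rw [hM, hMe]
        show M₁.rk ((M₁.E ∪ M₂.E) ∩ M₁.E) + M₂.rk ((M₁.E ∪ M₂.E) ∩ M₂.E) = _
        rw [union_inter_left hd subset_rfl subset_rfl, union_inter_right hd subset_rfl subset_rfl]
      rw [this]
      push_cast
      ring
    rw [hc', hr']
    ring

end FinMatroid
namespace FinMatroid

variable {α : Type*} [DecidableEq α]

lemma mobius_eq_of_rel {M : FinMatroid α} {f g : Finset α → ℤ}
    (h : ∀ F ∈ M.flats, (∑ G ∈ M.flats.filter fun G => F ⊆ G, f G)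
      = ∑ G ∈ M.flats.filter fun G => F ⊆ G, g G) :
    ∀ (k : ℕ) (F : Finset α), F ∈ M.flats → (M.E \ F).card ≤ k → f F = g F := by
  intro k
  induction k using Nat.strong_induction_on with
  | _ k ih =>
    intro F hF hk
    have hsum := h F hF
    have hmem : F ∈ M.flats.filter fun G => F ⊆ G :=
      Finset.mem_filter.mpr ⟨hF, subset_rfl⟩
    rw [← Finset.add_sum_erase _ f hmem, ← Finset.add_sum_erase _ g hmem] at hsum
    have herase : ∀ G ∈ (M.flats.filter fun G => F ⊆ G).erase F, f G = g G := by
      intro G hG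
      have hGne : G ≠ F := Finset.ne_of_mem_erase hG
      obtain ⟨hGf, hFG⟩ := Finset.mem_filter.mp (Finset.mem_of_mem_erase hG)
      have hGsub : G ⊆ M.E := subset_of_mem_flats hGf
      obtain ⟨x, hxG, hxF⟩ :=
        Finset.exists_of_ssubset (Finset.ssubset_iff_subset_ne.mpr ⟨hFG, hGne.symm⟩)
      have hss : M.E \ G ⊂ M.E \ F := by
        refine (Finset.ssubset_iff_of_subset
          (Finset.sdiff_subset_sdiff Finset.Subset.rfl hFG)).mpr
          ⟨x, Finset.mem_sdiff.mpr ⟨hGsub hxG, hxF⟩, fun hc => (Finset.mem_sdiff.mp hc).2 hxG⟩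
      exact ih _ (lt_of_lt_of_le (Finset.card_lt_card hss) hk) G hGf le_rfl
    have h2 : ∑ x ∈ (M.flats.filter fun G => F ⊆ G).erase F, f x
        = ∑ x ∈ (M.flats.filter fun G => F ⊆ G).erase F, g x :=
      Finset.sum_congr rfl herase
    omega

lemma subset_union_iff {M₁ M₂ : FinMatroid α} (hd : Disjoint M₁.E M₂.E)
    {F G₁ G₂ : Finset α} (hF : F ⊆ M₁.E ∪ M₂.E) (h₁ : G₁ ⊆ M₁.E) (h₂ : G₂ ⊆ M₂.E) :
    F ⊆ G₁ ∪ G₂ ↔ F ∩ M₁.E ⊆ G₁ ∧ F ∩ M₂.E ⊆ G₂ := by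
  constructor
  · intro h
    constructor
    · intro x hx
      obtain ⟨hxF, hx1⟩ := Finset.mem_inter.mp hx
      rcases Finset.mem_union.mp (h hxF) with hg | hg
      · exact hg
      · exact absurd hx1 (Finset.disjoint_right.mp hd (h₂ hg))
    · intro x hx
      obtain ⟨hxF, hx2⟩ := Finset.mem_inter.mp hx
      rcases Finset.mem_union.mp (h hxF) with hg | hg
      · exact absurd hx2 (Finset.disjoint_left.mp hd (h₁ hg))
      · exact hg
  · rintro ⟨k1, k2⟩
    intro x hx
    rcases Finset.mem_union.mp (hF hx) with h | h
    · exact Finset.mem_union_left _ (k1 (Finset.mem_inter.mpr ⟨hx, h⟩))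
    · exact Finset.mem_union_right _ (k2 (Finset.mem_inter.mpr ⟨hx, h⟩))

lemma mobius_directSum {μ : FinMatroid α → Finset α → ℤ} (hμ : IsFlatMobius μ)
    {M₁ M₂ : FinMatroid α} (hd : Disjoint M₁.E M₂.E) :
    ∀ F ∈ (M₁.directSum M₂ hd).flats,
      μ (M₁.directSum M₂ hd) F = μ M₁ (F ∩ M₁.E) * μ M₂ (F ∩ M₂.E) := by
  set M := M₁.directSum M₂ hd with hM
  have hMe : M.E = M₁.E ∪ M₂.E := rfl
  have rel : ∀ F ∈ M.flats,
      (∑ G ∈ M.flats.filter fun G => F ⊆ G, μ M G)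
        = ∑ G ∈ M.flats.filter fun G => F ⊆ G,
            (μ M₁ (G ∩ M₁.E) * μ M₂ (G ∩ M₂.E)) := by
    intro F hF
    have hFflat : M.IsFlat F := mem_flats_iff.mp hF
    obtain ⟨hf1, hf2, hFsub⟩ := (isFlat_directSum_iff hd).mp hFflat
    rw [hμ M F hFflat, Finset.sum_filter, sum_flats_directSum hd]
    have hterm : ∀ G₁ ∈ M₁.flats, ∀ G₂ ∈ M₂.flats,
        (if F ⊆ G₁ ∪ G₂ then μ M₁ ((G₁ ∪ G₂) ∩ M₁.E) * μ M₂ ((G₁ ∪ G₂) ∩ M₂.E) else 0)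
        = (if F ∩ M₁.E ⊆ G₁ then μ M₁ G₁ else 0) * (if F ∩ M₂.E ⊆ G₂ then μ M₂ G₂ else 0) := by
      intro G₁ hG₁ G₂ hG₂
      have hs₁ := subset_of_mem_flats hG₁
      have hs₂ := subset_of_mem_flats hG₂
      rw [union_inter_left hd hs₁ hs₂, union_inter_right hd hs₁ hs₂]
      by_cases h : F ⊆ G₁ ∪ G₂
      · obtain ⟨k1, k2⟩ := (subset_union_iff hd hFsub hs₁ hs₂).mp h
        rw [if_pos h, if_pos k1, if_pos k2]
      · rw [if_neg h]
        rcases not_and_or.mp (fun hc => h ((subset_union_iff hd hFsub hs₁ hs₂).mpr hc)) with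
          hc | hc
        · rw [if_neg hc, zero_mul]
        · rw [if_neg hc, mul_zero]
    rw [Finset.sum_congr rfl (fun G₁ hG₁ => Finset.sum_congr rfl (hterm G₁ hG₁)),
      ← Finset.sum_mul_sum]
    rw [← Finset.sum_filter, ← Finset.sum_filter,
      hμ M₁ (F ∩ M₁.E) (mem_flats_iff.mp (mem_flats_iff.mpr hf1)),
      hμ M₂ (F ∩ M₂.E) (mem_flats_iff.mp (mem_flats_iff.mpr hf2))]
    have hiff : F = M.E ↔ (F ∩ M₁.E = M₁.E ∧ F ∩ M₂.E = M₂.E) := by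
      constructor
      · intro h
        rw [h, hMe, union_inter_left hd subset_rfl subset_rfl,
          union_inter_right hd subset_rfl subset_rfl]
        exact ⟨rfl, rfl⟩
      · rintro ⟨ha, hb⟩
        rw [hMe, ← ha, ← hb]
        exact (inter_union_eq hFsub).symm
    by_cases h : F = M.E
    · obtain ⟨ha, hb⟩ := hiff.mp h
      rw [if_pos h, if_pos ha, if_pos hb, one_mul]
    · rcases not_and_or.mp (fun hc => h (hiff.mpr hc)) with hc | hc
      · rw [if_neg h, if_neg hc, zero_mul]
      · rw [if_neg h, if_neg hc, mul_zero]
  intro F hF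
  exact mobius_eq_of_rel rel ((M.E \ F).card) F hF le_rfl

end FinMatroid

open FinMatroid in
/-- the Möbius inversion of the topological zeta function is
multiplicative over direct sums: `Y_{M₁ ⊕ M₂} = Y_{M₁} Y_{M₂}`. -/
theorem mobiusInv_directSum {α : Type*} [DecidableEq α]
    (Z Y : FinMatroid α → RatFunc ℚ) (μ : FinMatroid α → Finset α → ℤ)
    (hZ : IsTopZeta Z) (hμ : IsFlatMobius μ) (hY : IsMobiusInv μ Z Y)
    (M₁ M₂ : FinMatroid α) (h₁ : M₁.Loopless) (h₂ : M₂.Loopless)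
    (hd : Disjoint M₁.E M₂.E) :
    Y (M₁.directSum M₂ hd) = Y M₁ * Y M₂ := by
  rw [hY (M₁.directSum M₂ hd), hY M₁, hY M₂, Finset.sum_mul_sum,
    sum_flats_directSum hd]
  refine Finset.sum_congr rfl fun F₁ hF₁ => Finset.sum_congr rfl fun F₂ hF₂ => ?_
  have hs₁ := subset_of_mem_flats hF₁
  have hs₂ := subset_of_mem_flats hF₂
  rw [mobius_directSum hμ hd (F₁ ∪ F₂) (union_mem_flats_directSum hd hF₁ hF₂),
    union_inter_left hd hs₁ hs₂, union_inter_right hd hs₁ hs₂,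
    Z_restrict_union hZ hd hs₁ hs₂,
    Z_directSum hZ (F₁ ∪ F₂).card _ _ _ le_rfl]
  push_cast
  ring
end

section
/- Let M be a matroid of rank r on finite ground set E. Then Z^⊤_{tr(M)}(s) = Z^⊤_M(s) + (1/(|E|s + r - 1)) · Y_M(s), where tr(M) is the truncation of M and Y_M is the Möbius inversion of Z^⊤_M. -/
/-!
Truncation removes the hyperplanes from the lattice of flats and leaves every restriction `M|F`
to a remaining flat unchanged, so `Z_{tr(M)}` obeys a recurrence over the flats of corank at
least two. For such a flat `F`, only the spanning sets change rank, which gives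
`q χ_{tr(M)/F}(q) = χ_{M/F}(q) + (q - 1) χ_{M/F}(0)`, hence
`χ̄_{tr(M)/F}(1) = χ̄_{M/F}(1) + μ(F, E)` because `χ_{M/F}(0) = μ(F, E)`. A hyperplane `H` has
`χ̄_{M/H}(1) = 1` and `μ(H, E) = -1`, so its contributions to the recurrence for `Z_M` and to `Y_M`
cancel, and comparing the two recurrences gives the formula.
-/

open scoped Classical
open Polynomial

theorem Finset.sum_powerset_neg_one_pow_card' {α R : Type*} [DecidableEq α] [Ring R]
    (A : Finset α) : ∑ S ∈ A.powerset, (-1 : R) ^ S.card = if A = ∅ then 1 else 0 := by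
  have h := congrArg (Int.cast : ℤ → R) (Finset.sum_powerset_neg_one_pow_card (x := A))
  push_cast [apply_ite (Int.cast : ℤ → R)] at h
  exact h

/-- The Möbius function computed from the left (`a = μ(x, ·)`) and from the right
(`m = μ(·, y)`) agree. -/
theorem mobius_left_eq_right {β R : Type*} [PartialOrder β] [DecidableEq β] [DecidableLE β]
    [CommRing R] {s : Finset β} {a m : β → R} {x y : β} (hx : x ∈ s) (hy : y ∈ s) (hxy : x ≤ y)
    (ha : ∀ z ∈ s, x ≤ z → ∑ w ∈ s with x ≤ w ∧ w ≤ z, a w = if z = x then 1 else 0)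
    (hm : ∀ w ∈ s, ∑ z ∈ s with w ≤ z, m z = if w = y then 1 else 0) :
    a y = m x := by
  have hswap : ∀ w z, w ∈ s.filter (x ≤ ·) ∧ z ∈ s.filter (w ≤ ·) ↔
      w ∈ s.filter (fun w => x ≤ w ∧ w ≤ z) ∧ z ∈ s.filter (x ≤ ·) := by
    intro w z
    simp only [Finset.mem_filter]
    constructor
    · rintro ⟨⟨hw, hxw⟩, hz, hwz⟩
      exact ⟨⟨hw, hxw, hwz⟩, hz, hxw.trans hwz⟩
    · rintro ⟨⟨hw, hxw, hwz⟩, hz, -⟩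
      exact ⟨⟨hw, hxw⟩, hz, hwz⟩
  calc a y = ∑ w ∈ s with x ≤ w, a w * ∑ z ∈ s with w ≤ z, m z := by
        rw [Finset.sum_congr rfl fun w hw => by rw [hm w (Finset.mem_filter.1 hw).1]]
        simp [hy, hxy]
    _ = ∑ z ∈ s with x ≤ z, (∑ w ∈ s with x ≤ w ∧ w ≤ z, a w) * m z := by
        simp_rw [Finset.mul_sum, Finset.sum_mul]
        exact Finset.sum_comm' hswap
    _ = m x := by
        rw [Finset.sum_congr rfl fun z hz => by
          rw [ha z (Finset.mem_filter.1 hz).1 (Finset.mem_filter.1 hz).2]]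
        simp [hx]

theorem RatFunc.natCast_mul_X_add_natCast_ne_zero {n : ℕ} (m : ℕ) (hn : n ≠ 0) :
    (n : RatFunc ℚ) * RatFunc.X + (m : RatFunc ℚ) ≠ 0 := by
  have hpoly : (n : ℚ[X]) * Polynomial.X + (m : ℚ[X]) ≠ 0 := fun h =>
    hn (by simpa using congrArg (Polynomial.coeff · 1) h)
  simpa using RatFunc.algebraMap_ne_zero hpoly

namespace FinMatroid

variable {α : Type*} [DecidableEq α]

section Flats

variable (M : FinMatroid α)

@[simp] lemma truncation_E : M.truncation.E = M.E := rfl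

@[simp] lemma truncation_rk (S : Finset α) :
    M.truncation.rk S = min (M.rk S) (M.rk M.E - 1) := rfl

lemma ground_nonempty_of_rk_pos (h : 0 < M.rk M.E) : M.E.Nonempty :=
  Finset.nonempty_iff_ne_empty.2 fun h0 => by rw [h0, M.rk_empty] at h; exact h.false

noncomputable def hyperplanes : Finset (Finset α) :=
  M.flats.filter fun H => M.rk H + 1 = M.rk M.E

variable {M}

lemma mem_flats {F : Finset α} : F ∈ M.flats ↔ M.IsFlat F := by
  simp only [flats, Finset.mem_filter, Finset.mem_powerset, and_iff_right_iff_imp]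
  exact fun h => h.1

lemma mem_properFlats {F : Finset α} : F ∈ M.properFlats ↔ M.IsFlat F ∧ F ≠ M.E := by
  simp only [properFlats, Finset.mem_filter, mem_flats]

variable (M) in
lemma isFlat_ground : M.IsFlat M.E := ⟨subset_rfl, fun _ hx hx' => absurd hx hx'⟩

lemma mem_hyperplanes {H : Finset α} :
    H ∈ M.hyperplanes ↔ M.IsFlat H ∧ M.rk H + 1 = M.rk M.E := by
  simp only [hyperplanes, Finset.mem_filter, mem_flats]

lemma IsFlat.rk_lt {F : Finset α} (hF : M.IsFlat F) (hne : F ≠ M.E) : M.rk F < M.rk M.E := by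
  obtain ⟨x, hxE, hxF⟩ := Finset.exists_of_ssubset (hF.1.ssubset_of_ne hne)
  exact (hF.2 x hxE hxF).trans_le (M.rk_mono (Finset.insert_subset hxE hF.1))

end Flats

section Closure

variable (M : FinMatroid α)

lemma rk_insert_eq_of_subset {x : α} {T U : Finset α} (hx : M.rk (insert x T) = M.rk T)
    (hTU : T ⊆ U) : M.rk (insert x U) = M.rk U := by
  have hsub := M.rk_submod (insert x T) U
  rw [Finset.insert_union, Finset.union_eq_right.2 hTU] at hsub
  have hT := M.rk_mono (Finset.subset_inter (Finset.subset_insert x T) hTU)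
  have hU := M.rk_mono (Finset.subset_insert x U)
  omega

lemma mem_cl {T : Finset α} {x : α} : x ∈ M.cl T ↔ x ∈ M.E ∧ M.rk (insert x T) = M.rk T :=
  Finset.mem_filter

lemma subset_cl {T : Finset α} (hT : T ⊆ M.E) : T ⊆ M.cl T := fun x hx =>
  M.mem_cl.2 ⟨hT hx, by rw [Finset.insert_eq_of_mem hx]⟩

lemma rk_union_of_subset_cl {T A : Finset α} (hA : A ⊆ M.cl T) : M.rk (T ∪ A) = M.rk T := by
  induction A using Finset.induction_on with
  | empty => rw [Finset.union_empty]
  | insert a A _ ih =>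
    rw [Finset.insert_subset_iff] at hA
    rw [Finset.union_insert,
      M.rk_insert_eq_of_subset (M.mem_cl.1 hA.1).2 Finset.subset_union_left, ih hA.2]

lemma rk_cl {T : Finset α} (hT : T ⊆ M.E) : M.rk (M.cl T) = M.rk T := by
  simpa [Finset.union_eq_right.2 (M.subset_cl hT)] using
    M.rk_union_of_subset_cl (T := T) subset_rfl

lemma isFlat_cl {T : Finset α} (hT : T ⊆ M.E) : M.IsFlat (M.cl T) := by
  refine ⟨Finset.filter_subset _ _, fun x hx hxcl =>
    (M.rk_mono (Finset.subset_insert _ _)).lt_of_ne fun h => hxcl ?_⟩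
  refine M.mem_cl.2 ⟨hx, le_antisymm ?_ (M.rk_mono (Finset.subset_insert _ _))⟩
  calc M.rk (insert x T) ≤ M.rk (insert x (M.cl T)) :=
        M.rk_mono (Finset.insert_subset_insert _ (M.subset_cl hT))
    _ = M.rk T := by rw [← h, M.rk_cl hT]

lemma cl_subset_iff {T H : Finset α} (hH : M.IsFlat H) (hT : T ⊆ M.E) :
    M.cl T ⊆ H ↔ T ⊆ H := by
  refine ⟨(M.subset_cl hT).trans, fun hTH x hx => ?_⟩
  by_contra hxH
  obtain ⟨hxE, hxT⟩ := M.mem_cl.1 hx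
  exact (hH.2 x hxE hxH).ne' (M.rk_insert_eq_of_subset hxT hTH)

lemma cl_eq_ground_iff {T : Finset α} (hT : T ⊆ M.E) : M.cl T = M.E ↔ M.rk T = M.rk M.E := by
  refine ⟨fun h => by rw [← M.rk_cl hT, h], fun h => ?_⟩
  refine (Finset.filter_subset _ _).antisymm fun x hx =>
    M.mem_cl.2 ⟨hx, le_antisymm ?_ (M.rk_mono (Finset.subset_insert _ _))⟩
  exact h ▸ M.rk_mono (Finset.insert_subset hx hT)

end Closure

section CharPoly

lemma eval_one_reducedCharPoly_of_X_mul_eq {p q : ℚ[X]} {c : ℚ} (hp : p.eval 1 = 0)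
    (hq : q.eval 1 = 0) (h : X * p = q + (X - C 1) * C c) :
    (reducedCharPoly p).eval 1 = (reducedCharPoly q).eval 1 + c := by
  have hp' := Polynomial.mul_divByMonic_eq_iff_isRoot.2 hp
  have hq' := Polynomial.mul_divByMonic_eq_iff_isRoot.2 hq
  have hdiv : X * reducedCharPoly p = reducedCharPoly q + C c := by
    refine mul_left_cancel₀ (Polynomial.X_sub_C_ne_zero (1 : ℚ)) ?_
    unfold reducedCharPoly
    linear_combination X * hp' - hq' + h
  simpa using congrArg (Polynomial.eval 1) hdiv

variable (M : FinMatroid α)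

lemma contractCharPoly_eval_one {F : Finset α} (hF : F ⊆ M.E) (hne : F ≠ M.E) :
    (M.contractCharPoly F).eval 1 = 0 := by
  have hEF : M.E \ F ≠ ∅ := fun h => hne (hF.antisymm (Finset.sdiff_eq_empty_iff_subset.1 h))
  simp [contractCharPoly, charPolyAux, Polynomial.eval_finsetSum,
    Finset.sum_powerset_neg_one_pow_card', hEF]

lemma contractCharPoly_eval_zero {F : Finset α} (hF : F ⊆ M.E) :
    (M.contractCharPoly F).eval 0 = ∑ S ∈ (M.E \ F).powerset,
      (-1 : ℚ) ^ S.card * if M.rk (S ∪ F) = M.rk M.E then 1 else 0 := by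
  rw [contractCharPoly, charPolyAux, Polynomial.eval_finsetSum, Finset.sdiff_union_of_subset hF]
  refine Finset.sum_congr rfl fun S hS => ?_
  have hSF := M.rk_mono (Finset.subset_union_right (s₁ := S) (s₂ := F))
  have hSE := M.rk_mono (Finset.union_subset
    ((Finset.mem_powerset.1 hS).trans Finset.sdiff_subset) hF)
  simp only [Polynomial.eval_mul, Polynomial.eval_pow, Polynomial.eval_neg, Polynomial.eval_one,
    Polynomial.eval_X, zero_pow_eq]
  congr 2
  apply propext
  omega

/-- Truncation only changes the rank of the spanning sets, each losing one. -/
lemma X_mul_truncation_contractCharPoly {F : Finset α} (hF : F ⊆ M.E)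
    (hrk : M.rk F < M.rk M.E) :
    X * M.truncation.contractCharPoly F =
      M.contractCharPoly F + (X - C 1) * C ((M.contractCharPoly F).eval 0) := by
  rw [contractCharPoly_eval_zero M hF]
  simp only [contractCharPoly, charPolyAux, truncation_E, truncation_rk,
    Finset.sdiff_union_of_subset hF, Finset.mul_sum, map_sum, ← Finset.sum_add_distrib]
  refine Finset.sum_congr rfl fun S hS => ?_
  have hSF := M.rk_mono (Finset.subset_union_right (s₁ := S) (s₂ := F))
  have hSE := M.rk_mono (Finset.union_subset
    ((Finset.mem_powerset.1 hS).trans Finset.sdiff_subset) hF)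
  rw [min_eq_right (Nat.sub_le _ 1), min_eq_left (Nat.le_sub_one_of_lt hrk)]
  rcases hSE.lt_or_eq with hlt | heq
  · rw [min_eq_left (Nat.le_sub_one_of_lt hlt), if_neg hlt.ne,
      show M.rk M.E - M.rk F - (M.rk (S ∪ F) - M.rk F) =
        M.rk M.E - 1 - M.rk F - (M.rk (S ∪ F) - M.rk F) + 1 by omega, pow_succ]
    simp only [mul_zero, map_zero]
    ring
  · rw [heq, min_eq_right (Nat.sub_le _ 1), if_pos rfl, Nat.sub_self, Nat.sub_self]
    simp only [pow_zero, mul_one, map_pow, map_neg, map_one]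
    ring

lemma redCharContractOne_truncation {F : Finset α} (hF : F ⊆ M.E) (hrk : M.rk F < M.rk M.E) :
    M.truncation.redCharContractOne F =
      M.redCharContractOne F + (M.contractCharPoly F).eval 0 := by
  have hne : F ≠ M.E := by rintro rfl; exact hrk.false
  exact eval_one_reducedCharPoly_of_X_mul_eq (M.truncation.contractCharPoly_eval_one hF hne)
    (M.contractCharPoly_eval_one hF hne) (M.X_mul_truncation_contractCharPoly hF hrk)

variable {M}

lemma contractCharPoly_of_mem_hyperplanes {H : Finset α} (hH : H ∈ M.hyperplanes) :
    M.contractCharPoly H = X - C 1 := by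
  obtain ⟨hflat, hrk⟩ := mem_hyperplanes.1 hH
  have hEH : M.E \ H ≠ ∅ := fun h => by
    rw [hflat.1.antisymm (Finset.sdiff_eq_empty_iff_subset.1 h)] at hrk
    omega
  have hterm : ∀ S ∈ (M.E \ H).powerset,
      (-1 : ℚ[X]) ^ S.card * X ^ (M.rk M.E - M.rk H - (M.rk (S ∪ H) - M.rk H)) =
        (-1) ^ S.card + if S = ∅ then X - C 1 else 0 := by
    intro S hS
    rcases S.eq_empty_or_nonempty with rfl | ⟨x, hx⟩
    · rw [Finset.empty_union, show M.rk M.E - M.rk H - (M.rk H - M.rk H) = 1 by omega]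
      simp
    · obtain ⟨hxE, hxH⟩ := Finset.mem_sdiff.1 (Finset.mem_powerset.1 hS hx)
      have h₁ := hflat.2 x hxE hxH
      have h₂ := M.rk_mono (Finset.insert_subset (Finset.mem_union_left H hx)
        (Finset.subset_union_right (s₁ := S)))
      have h₃ := M.rk_mono (Finset.union_subset
        ((Finset.mem_powerset.1 hS).trans Finset.sdiff_subset) hflat.1)
      rw [show M.rk M.E - M.rk H - (M.rk (S ∪ H) - M.rk H) = 0 by omega,
        if_neg (Finset.nonempty_iff_ne_empty.1 ⟨x, hx⟩)]
      simp
  rw [contractCharPoly, charPolyAux, Finset.sdiff_union_of_subset hflat.1,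
    Finset.sum_congr rfl hterm, Finset.sum_add_distrib, Finset.sum_powerset_neg_one_pow_card',
    if_neg hEH, Finset.sum_ite_eq', if_pos (Finset.empty_mem_powerset _), zero_add]

lemma redCharContractOne_of_mem_hyperplanes {H : Finset α} (hH : H ∈ M.hyperplanes) :
    M.redCharContractOne H = 1 := by
  have h := Polynomial.mul_divByMonic_cancel_left (1 : ℚ[X]) (Polynomial.monic_X_sub_C (1 : ℚ))
  rw [mul_one] at h
  rw [redCharContractOne, reducedCharPoly, contractCharPoly_of_mem_hyperplanes hH, h,
    Polynomial.eval_one]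

end CharPoly

section Mobius

variable {M : FinMatroid α}

lemma sum_flats_between_sum_cl_union_eq {F H : Finset α} (hH : M.IsFlat H) (hFH : F ⊆ H) :
    ∑ G ∈ M.flats with F ⊆ G ∧ G ⊆ H,
      ∑ S ∈ (M.E \ F).powerset with M.cl (S ∪ F) = G, (-1 : ℚ) ^ S.card =
      if H = F then 1 else 0 := by
  have hSF : ∀ S ⊆ M.E \ F, S ∪ F ⊆ M.E := fun S hS =>
    Finset.union_subset (hS.trans Finset.sdiff_subset) (hFH.trans hH.1)
  have hfiber : {S ∈ (M.E \ F).powerset | M.cl (S ∪ F) ∈ {G ∈ M.flats | F ⊆ G ∧ G ⊆ H}} =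
      (H \ F).powerset := by
    ext S
    simp only [Finset.mem_filter, Finset.mem_powerset, mem_flats, Finset.subset_sdiff]
    constructor
    · rintro ⟨⟨hSE, hSdisj⟩, -, -, hclH⟩
      exact ⟨(Finset.subset_union_left.trans (M.subset_cl (hSF S
        (Finset.subset_sdiff.2 ⟨hSE, hSdisj⟩)))).trans hclH, hSdisj⟩
    · rintro ⟨hSH, hSdisj⟩
      have hS : S ⊆ M.E \ F := Finset.subset_sdiff.2 ⟨hSH.trans hH.1, hSdisj⟩
      exact ⟨Finset.subset_sdiff.1 hS, M.isFlat_cl (hSF S hS),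
        Finset.subset_union_right.trans (M.subset_cl (hSF S hS)),
        (M.cl_subset_iff hH (hSF S hS)).2 (Finset.union_subset hSH hFH)⟩
  rw [Finset.sum_fiberwise_eq_sum_filter, hfiber, Finset.sum_powerset_neg_one_pow_card']
  exact if_congr (Finset.sdiff_eq_empty_iff_subset.trans ⟨fun h => h.antisymm hFH, fun h => h.le⟩)
    rfl rfl

/-- Grouping the subsets `S ⊆ E \ F` by the flat `cl (S ∪ F)` computes `μ(F, ·)`. -/
lemma IsFlatMobius.apply_eq_eval_zero {μ : FinMatroid α → Finset α → ℤ} (hμ : IsFlatMobius μ)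
    {F : Finset α} (hF : M.IsFlat F) : (μ M F : ℚ) = (M.contractCharPoly F).eval 0 := by
  have h := mobius_left_eq_right (m := fun G => (μ M G : ℚ))
    (a := fun G => ∑ S ∈ (M.E \ F).powerset with M.cl (S ∪ F) = G, (-1 : ℚ) ^ S.card)
    (mem_flats.2 hF) (mem_flats.2 (isFlat_ground M)) hF.1
    (fun H hH hFH => sum_flats_between_sum_cl_union_eq (mem_flats.1 hH) hFH)
    (fun G hG => by exact_mod_cast hμ M G (mem_flats.1 hG))
  rw [M.contractCharPoly_eval_zero hF.1, ← h, Finset.sum_filter]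
  refine Finset.sum_congr rfl fun S hS => ?_
  have hSF : S ∪ F ⊆ M.E :=
    Finset.union_subset ((Finset.mem_powerset.1 hS).trans Finset.sdiff_subset) hF.1
  rw [mul_ite, mul_one, mul_zero, if_congr (M.cl_eq_ground_iff hSF) rfl rfl]

lemma IsFlatMobius.apply_ground {μ : FinMatroid α → Finset α → ℤ} (hμ : IsFlatMobius μ) :
    (μ M M.E : ℚ) = 1 := by
  rw [hμ.apply_eq_eval_zero (isFlat_ground M)]
  simp [contractCharPoly, charPolyAux]

lemma IsFlatMobius.apply_of_mem_hyperplanes {μ : FinMatroid α → Finset α → ℤ}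
    (hμ : IsFlatMobius μ) {H : Finset α} (hH : H ∈ M.hyperplanes) : (μ M H : ℚ) = -1 := by
  rw [hμ.apply_eq_eval_zero (mem_hyperplanes.1 hH).1, contractCharPoly_of_mem_hyperplanes hH]
  simp

end Mobius

section Zeta

lemma contractCharPoly_congr {M M' : FinMatroid α} (hE : M.E = M'.E)
    (hrk : ∀ S ⊆ M.E, M.rk S = M'.rk S) {F : Finset α} (hF : F ⊆ M.E) :
    M.contractCharPoly F = M'.contractCharPoly F := by
  rw [contractCharPoly, contractCharPoly, charPolyAux, charPolyAux, ← hE]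
  refine Finset.sum_congr rfl fun S hS => ?_
  have hSF := Finset.union_subset ((Finset.mem_powerset.1 hS).trans Finset.sdiff_subset) hF
  rw [hrk _ hSF, hrk _ (Finset.union_subset Finset.sdiff_subset hF), hrk F hF]

lemma IsTopZeta.congr {Z : FinMatroid α → RatFunc ℚ} (hZ : IsTopZeta Z) {M M' : FinMatroid α}
    (hE : M.E = M'.E) (hrk : ∀ S ⊆ M.E, M.rk S = M'.rk S) : Z M = Z M' := by
  induction hn : M.E.card using Nat.strong_induction_on generalizing M M' with
  | _ n ih =>
  rcases M.E.eq_empty_or_nonempty with h0 | hne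
  · rw [hZ.1 M h0, hZ.1 M' (hE ▸ h0)]
  rw [hZ.2 M hne, hZ.2 M' (hE ▸ hne), properFlats, properFlats, ← flats_congr hE hrk, ← hE,
    ← hrk M.E subset_rfl]
  refine congrArg (· / _) (Finset.sum_congr rfl fun F hF => ?_)
  obtain ⟨hflat, hne⟩ := mem_properFlats.1 hF
  rw [redCharContractOne, redCharContractOne, contractCharPoly_congr hE hrk hflat.1,
    ih F.card (hn ▸ Finset.card_lt_card (hflat.1.ssubset_of_ne hne)) (M := M.restrict F)
      (M' := M'.restrict F) rfl (fun S hS => hrk S (hS.trans hflat.1)) rfl]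

lemma IsTopZeta.mul_eq_sum {Z : FinMatroid α → RatFunc ℚ} (hZ : IsTopZeta Z) {M : FinMatroid α}
    (hne : M.E.Nonempty) :
    Z M * ((M.E.card : RatFunc ℚ) * RatFunc.X + (M.rk M.E : RatFunc ℚ)) =
      ∑ F ∈ M.properFlats, RatFunc.C (M.redCharContractOne F) * Z (M.restrict F) := by
  rw [hZ.2 M hne, div_mul_cancel₀ _ (RatFunc.natCast_mul_X_add_natCast_ne_zero _ hne.card_pos.ne')]

variable (M : FinMatroid α)

lemma truncation_properFlats :
    M.truncation.properFlats = M.flats.filter fun F => M.rk F + 1 < M.rk M.E := by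
  ext F
  simp only [mem_properFlats, Finset.mem_filter, mem_flats, IsFlat, truncation_E, truncation_rk]
  constructor
  · rintro ⟨⟨hFE, hflat⟩, hne⟩
    obtain ⟨x, hxE, hxF⟩ := Finset.exists_of_ssubset (hFE.ssubset_of_ne hne)
    have hx := hflat x hxE hxF
    exact ⟨⟨hFE, fun y hyE hyF => by have := hflat y hyE hyF; omega⟩, by omega⟩
  · rintro ⟨⟨hFE, hflat⟩, hrk⟩
    exact ⟨⟨hFE, fun y hyE hyF => by have := hflat y hyE hyF; omega⟩, by rintro rfl; omega⟩

lemma sum_properFlats_eq {R : Type*} [AddCommMonoid R] (f : Finset α → R) :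
    ∑ F ∈ M.properFlats, f F =
      ∑ F ∈ M.truncation.properFlats, f F + ∑ H ∈ M.hyperplanes, f H := by
  rw [truncation_properFlats, hyperplanes, ← Finset.sum_union
    (Finset.disjoint_filter.2 fun F _ hlt heq => by omega)]
  refine Finset.sum_congr (Finset.ext fun F => ?_) fun _ _ => rfl
  simp only [mem_properFlats, Finset.mem_union, Finset.mem_filter, mem_flats, ← and_or_left]
  refine and_congr_right fun hF => ⟨fun hne => ?_, ?_⟩
  · have := hF.rk_lt hne
    omega
  · rintro h rfl
    omega

lemma sum_flats_eq {R : Type*} [AddCommMonoid R] (f : Finset α → R) :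
    ∑ F ∈ M.flats, f F = ∑ F ∈ M.properFlats, f F + f M.E := by
  rw [properFlats, Finset.filter_ne', Finset.sum_erase_add _ _ (mem_flats.2 (isFlat_ground M))]

variable {M}

lemma IsTopZeta.mul_eq_sum_add_sum_hyperplanes {Z : FinMatroid α → RatFunc ℚ}
    (hZ : IsTopZeta Z) (hne : M.E.Nonempty) :
    Z M * ((M.E.card : RatFunc ℚ) * RatFunc.X + (M.rk M.E : RatFunc ℚ)) =
      ∑ F ∈ M.truncation.properFlats, RatFunc.C (M.redCharContractOne F) * Z (M.restrict F) +
        ∑ H ∈ M.hyperplanes, Z (M.restrict H) := by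
  rw [hZ.mul_eq_sum hne, sum_properFlats_eq]
  congr 1
  exact Finset.sum_congr rfl fun H hH => by
    rw [redCharContractOne_of_mem_hyperplanes hH, map_one, one_mul]

lemma IsTopZeta.truncation_mul_eq {Z : FinMatroid α → RatFunc ℚ} (hZ : IsTopZeta Z)
    {μ : FinMatroid α → Finset α → ℤ} (hμ : IsFlatMobius μ) (hne : M.E.Nonempty) :
    Z M.truncation * ((M.E.card : RatFunc ℚ) * RatFunc.X + ((M.rk M.E - 1 : ℕ) : RatFunc ℚ)) =
      ∑ F ∈ M.truncation.properFlats,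
        (RatFunc.C (M.redCharContractOne F) + (μ M F : RatFunc ℚ)) * Z (M.restrict F) := by
  have h := hZ.mul_eq_sum (M := M.truncation) hne
  rw [truncation_E, truncation_rk, min_eq_right (Nat.sub_le _ 1)] at h
  rw [h]
  refine Finset.sum_congr rfl fun F hF => ?_
  obtain ⟨hflat, hrk⟩ : M.IsFlat F ∧ M.rk F + 1 < M.rk M.E := by
    simpa only [truncation_properFlats, Finset.mem_filter, mem_flats] using hF
  have hZF : Z (M.truncation.restrict F) = Z (M.restrict F) :=
    hZ.congr rfl fun S hS => by
      have := M.rk_mono (show S ⊆ F from hS)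
      show min (M.rk S) (M.rk M.E - 1) = M.rk S
      omega
  rw [redCharContractOne_truncation M hflat.1 (by omega), ← hμ.apply_eq_eval_zero hflat, map_add,
    map_intCast, hZF]

lemma IsMobiusInv.apply_eq {μ : FinMatroid α → Finset α → ℤ} {Z Y : FinMatroid α → RatFunc ℚ}
    (hY : IsMobiusInv μ Z Y) (hμ : IsFlatMobius μ) (M : FinMatroid α) :
    Y M = ∑ F ∈ M.truncation.properFlats, (μ M F : RatFunc ℚ) * Z (M.restrict F) -
      ∑ H ∈ M.hyperplanes, Z (M.restrict H) + Z M := by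
  have hcast : ∀ F, (μ M F : RatFunc ℚ) = RatFunc.C (μ M F : ℚ) := fun F =>
    (map_intCast (RatFunc.C (K := ℚ)) _).symm
  rw [hY M, sum_flats_eq, sum_properFlats_eq, hcast M.E, hμ.apply_ground, map_one, one_mul,
    sub_eq_add_neg, ← Finset.sum_neg_distrib]
  congr 2
  exact Finset.sum_congr rfl fun H hH => by
    rw [hcast, hμ.apply_of_mem_hyperplanes hH, map_neg, map_one, neg_one_mul]

end Zeta

end FinMatroid

open FinMatroid in
theorem topZeta_truncation_general {α : Type*} [DecidableEq α]
    (Z Y : FinMatroid α → RatFunc ℚ) (μ : FinMatroid α → Finset α → ℤ)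
    (hZ : IsTopZeta Z) (hμ : IsFlatMobius μ) (hY : IsMobiusInv μ Z Y)
    (M : FinMatroid α) (r : ℕ) (hr : M.rk M.E = r) (hr1 : 1 ≤ r) :
    Z M.truncation = Z M +
      (1 / ((M.E.card : RatFunc ℚ) * RatFunc.X + ((r - 1 : ℕ) : RatFunc ℚ))) * Y M := by
  subst hr
  have hne := M.ground_nonempty_of_rk_pos hr1
  have hD := RatFunc.natCast_mul_X_add_natCast_ne_zero (M.rk M.E - 1) hne.card_pos.ne'
  have hZM := hZ.mul_eq_sum_add_sum_hyperplanes hne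
  have hZtr := hZ.truncation_mul_eq hμ hne
  simp only [add_mul, Finset.sum_add_distrib] at hZtr
  have hcast : ((M.rk M.E - 1 : ℕ) : RatFunc ℚ) = M.rk M.E - 1 := Nat.cast_pred hr1
  rw [hY.apply_eq hμ, one_div_mul_eq_div, add_div' _ _ _ hD, eq_div_iff hD]
  linear_combination hZtr - hZM - Z M * hcast

open FinMatroid in
/-- `Z_{tr(M)}(s) = Z_M(s) + Y_M(s)/(|E|s + rk M - 1)`. -/
theorem topZeta_truncation {α : Type*} [DecidableEq α]
    (Z Y : FinMatroid α → RatFunc ℚ) (μ : FinMatroid α → Finset α → ℤ)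
    (hZ : IsTopZeta Z) (hμ : IsFlatMobius μ) (hY : IsMobiusInv μ Z Y)
    (M : FinMatroid α) (hL : M.Loopless) (r : ℕ) (hr : M.rk M.E = r) (hr1 : 1 ≤ r) :
    Z M.truncation = Z M +
      (1 / ((M.E.card : RatFunc ℚ) * RatFunc.X + ((r - 1 : ℕ) : RatFunc ℚ))) * Y M :=
  topZeta_truncation_general Z Y μ hZ hμ hY M r hr hr1
end

section
/- For the uniform matroid U_{r,n} with 1 ≤ r ≤ n, the Möbius inversion of the topological zeta function is Y_{U_{r,n}}(s) = (1/(ns+r)) · ( −rs · (−s/(s+1))^{r−1} · C(n,r) ). -/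
open scoped Classical
open Polynomial

section AuxGen
set_option linter.unusedSectionVars false
open Finset Polynomial
variable {α : Type*} [DecidableEq α]

/-- triangle sum swap -/
lemma sum_triangle' {M : Type*} [AddCommMonoid M] (r : ℕ) (f : ℕ → ℕ → M) :
    ∑ j ∈ Finset.range r, ∑ i ∈ Finset.range (r - j), f j i
      = ∑ k ∈ Finset.range r, ∑ j ∈ Finset.range (k + 1), f j (k - j) := by
  induction r with
  | zero => simp
  | succ r ih =>
    rw [Finset.sum_range_succ (f := fun k => ∑ j ∈ Finset.range (k+1), f j (k-j)), ← ih]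
    have h1 : ∀ j ∈ Finset.range (r+1), ∑ i ∈ Finset.range (r + 1 - j), f j i
        = ∑ i ∈ Finset.range (r - j), f j i + f j (r - j) := by
      intro j hj
      rw [Finset.mem_range] at hj
      have h2 : r + 1 - j = (r - j) + 1 := by omega
      rw [h2, Finset.sum_range_succ]
    rw [Finset.sum_congr rfl h1, Finset.sum_add_distrib,
      Finset.sum_range_succ (f := fun j => ∑ i ∈ Finset.range (r - j), f j i),
      Nat.sub_self, Finset.range_zero, Finset.sum_empty, add_zero]

/-- sums over filtered powerset depending only on card -/
lemma sum_powerset_filter_card {M : Type*} [AddCommMonoid M] (D : Finset α) (ρ : ℕ)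
    (hρ : ρ ≤ D.card + 1) (f : ℕ → M) :
    ∑ S ∈ D.powerset.filter (fun S => S.card < ρ), f S.card
      = ∑ i ∈ Finset.range ρ, D.card.choose i • f i := by
  rw [Finset.sum_filter]
  have h : ∀ S ∈ D.powerset, (if S.card < ρ then f S.card else 0)
      = (fun m => if m < ρ then f m else 0) S.card := fun S _ => rfl
  rw [Finset.sum_congr rfl h, Finset.sum_powerset_apply_card (fun m => if m < ρ then f m else 0)]
  rw [← Finset.sum_subset (Finset.range_subset_range.mpr hρ)
    (fun i _ hi => by rw [Finset.mem_range, not_lt] at hi; rw [if_neg (by omega), smul_zero])]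
  exact Finset.sum_congr rfl fun i hi => by rw [Finset.mem_range] at hi; rw [if_pos hi]

lemma cast_alt_sum_choose (e : ℕ) :
    ∑ i ∈ Finset.range (e+1), (-1:ℚ)^i * (e.choose i) = if e = 0 then 1 else 0 := by
  have h := congrArg (Int.cast : ℤ → ℚ) (Int.alternating_sum_range_choose (n := e))
  push_cast at h
  rw [h]

lemma alt_sum_choose_mul (d : ℕ) (hd : 1 ≤ d) :
    ∑ i ∈ Finset.range (d+1), (d.choose i : ℚ) * ((-1)^i * ((d - i : ℕ) : ℚ))
      = if d = 1 then 1 else 0 := by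
  obtain ⟨e, rfl⟩ : ∃ e, d = e + 1 := ⟨d - 1, by omega⟩
  rw [Finset.sum_range_succ]
  simp only [Nat.sub_self, Nat.cast_zero, mul_zero, add_zero]
  have h1 : ∀ i ∈ Finset.range (e+1), ((e+1).choose i : ℚ) * ((-1)^i * ((e + 1 - i : ℕ) : ℚ))
      = ((e+1 : ℕ) : ℚ) * ((-1)^i * (e.choose i)) := by
    intro i hi
    rw [Finset.mem_range] at hi
    have key : (e+1).choose i * (e + 1 - i) = (e+1) * e.choose i := by
      have h2 := Nat.choose_succ_right_eq (e+1) i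
      have h3 := Nat.add_one_mul_choose_eq e i
      -- h3 : (e+1) * e.choose i = (e+1).choose (i+1) * (i+1)
      omega
    calc ((e+1).choose i : ℚ) * ((-1)^i * ((e + 1 - i : ℕ) : ℚ))
        = (((e+1).choose i * (e + 1 - i) : ℕ) : ℚ) * (-1)^i := by push_cast; ring
      _ = (((e+1) * e.choose i : ℕ) : ℚ) * (-1)^i := by rw [key]
      _ = ((e+1 : ℕ) : ℚ) * ((-1)^i * (e.choose i)) := by push_cast; ring
  rw [Finset.sum_congr rfl h1, ← Finset.mul_sum]
  have h5 : ∀ i ∈ Finset.range (e+1), (-1:ℚ)^i * (e.choose i) = (-1)^i * (e.choose i) :=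
    fun _ _ => rfl
  rw [Finset.sum_congr rfl h5, cast_alt_sum_choose]
  rcases Nat.eq_zero_or_pos e with h | h
  · subst h; norm_num
  · rw [if_neg (by omega), if_neg (by omega), mul_zero]

/-- the Möbius value candidate -/
def wμ (m ρ : ℕ) : ℤ := -∑ t ∈ Finset.range ρ, (-1:ℤ)^t * (m.choose t : ℤ)

lemma wμ_system (m ρ : ℕ) (h1 : 1 ≤ ρ) (h2 : ρ ≤ m) :
    ∑ i ∈ Finset.range ρ, (m.choose i : ℤ) * wμ (m - i) (ρ - i) = -1 := by
  simp only [wμ, mul_neg, Finset.mul_sum]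
  rw [Finset.sum_neg_distrib, neg_eq_iff_eq_neg, neg_neg]
  rw [sum_triangle' ρ (fun j t => ((m.choose j : ℤ) * ((-1)^t * ((m-j).choose t))))]
  have h4 : ∀ s ∈ Finset.range ρ, ∑ j ∈ Finset.range (s+1),
      (m.choose j : ℤ) * ((-1)^(s-j) * ((m-j).choose (s-j)))
      = if s = 0 then 1 else 0 := by
    intro s hs
    rw [Finset.mem_range] at hs
    have h5 : ∀ j ∈ Finset.range (s+1), (m.choose j : ℤ) * ((-1)^(s-j) * ((m-j).choose (s-j)))
        = (m.choose s : ℤ) * ((-1)^s * ((-1)^j * (s.choose j))) := by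
      intro j hj
      rw [Finset.mem_range] at hj
      have hjs : j ≤ s := by omega
      have hsm : s ≤ m := by omega
      have key := Nat.choose_mul (n := m) hjs
      have hsign : (-1:ℤ)^(s-j) = (-1)^s * (-1)^j := by
        have : (-1:ℤ)^(s-j) * (-1)^j = (-1)^s := by rw [← pow_add]; congr 1; omega
        have hj2 : ((-1:ℤ)^j) * ((-1)^j) = 1 := by
          rw [← mul_pow]; norm_num
        calc (-1:ℤ)^(s-j) = (-1)^(s-j) * (((-1)^j) * ((-1)^j)) := by rw [hj2, mul_one]
          _ = (-1)^s * (-1)^j := by rw [← mul_assoc, this]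
      calc (m.choose j : ℤ) * ((-1)^(s-j) * ((m-j).choose (s-j)))
          = ((m.choose j * (m-j).choose (s-j) : ℕ) : ℤ) * (-1)^(s-j) := by push_cast; ring
        _ = ((m.choose s * s.choose j : ℕ) : ℤ) * (-1)^(s-j) := by rw [← key]
        _ = (m.choose s : ℤ) * ((-1)^s * ((-1)^j * (s.choose j))) := by
            rw [hsign]; push_cast; ring
    rw [Finset.sum_congr rfl h5, ← Finset.mul_sum, ← Finset.mul_sum]
    rcases Nat.eq_zero_or_pos s with h | h
    · subst h; norm_num
    · rw [if_neg (by omega)]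
      have h6 : ∑ j ∈ Finset.range (s+1), (-1:ℤ)^j * (s.choose j) = 0 :=
        Int.alternating_sum_range_choose_of_ne (by omega)
      rw [h6, mul_zero, mul_zero]
  rw [Finset.sum_congr rfl h4]
  rw [Finset.sum_ite_eq' (Finset.range ρ) 0 (fun _ => (1:ℤ))]
  rw [if_pos (Finset.mem_range.mpr (by omega))]

end AuxGen

section AuxMat
set_option linter.unusedSectionVars false
set_option maxHeartbeats 1000000
open Finset Polynomial FinMatroid

variable {α : Type*} [DecidableEq α]

lemma reducedCharPoly_eval_one (p : Polynomial ℚ) (h : p.eval 1 = 0) :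
    (reducedCharPoly p).eval 1 = p.derivative.eval 1 := by
  have hm : (X - C (1:ℚ)).Monic := monic_X_sub_C 1
  have hp : p = (X - C 1) * (p /ₘ (X - C 1)) := by
    conv_lhs => rw [← p.modByMonic_add_div (X - C 1)]
    rw [p.modByMonic_X_sub_C_eq_C_eval 1, h, map_zero, zero_add]
  rw [reducedCharPoly]
  conv_rhs => rw [hp]
  rw [derivative_mul, eval_add, eval_mul, eval_mul, derivative_sub, derivative_X, derivative_C,
    sub_zero, eval_one, one_mul, eval_sub, eval_X, eval_C, sub_self, zero_mul, add_zero]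

lemma eval_one_charPolyAux (D : Finset α) (rkf : Finset α → ℕ) (hD : D.Nonempty) :
    (charPolyAux D rkf).eval 1 = 0 := by
  rw [charPolyAux, eval_finset_sum]
  have h : ∀ S ∈ D.powerset, ((-1:ℚ[X])^S.card * X^(rkf D - rkf S)).eval 1 = (-1:ℚ)^S.card := by
    intro S _; simp
  rw [Finset.sum_congr rfl h]
  have h2 := Finset.sum_powerset_neg_one_pow_card_of_nonempty hD
  have h3 := congrArg (Int.cast : ℤ → ℚ) h2
  push_cast at h3
  exact h3

lemma redCC_formula (D : Finset α) (rkf : Finset α → ℕ) (hD : D.Nonempty) :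
    (reducedCharPoly (charPolyAux D rkf)).eval 1
      = ∑ S ∈ D.powerset, (-1:ℚ)^S.card * ((rkf D - rkf S : ℕ) : ℚ) := by
  rw [reducedCharPoly_eval_one _ (eval_one_charPolyAux D rkf hD), charPolyAux, derivative_sum,
    eval_finset_sum]
  refine Finset.sum_congr rfl fun S _ => ?_
  have h1 : (-1:ℚ[X])^S.card * X^(rkf D - rkf S) = C ((-1)^S.card) * X^(rkf D - rkf S) := by
    simp [← C_pow]
  rw [h1, derivative_C_mul_X_pow, eval_mul, eval_C, eval_pow, eval_X, one_pow, mul_one]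

/-- a matroid whose rank function on the ground set is the cardinality -/
def IsFreeM (N : FinMatroid α) : Prop := ∀ S ⊆ N.E, N.rk S = S.card

lemma isFreeM_restrict {N : FinMatroid α} (hN : IsFreeM N) {F : Finset α} (hF : F ⊆ N.E) :
    IsFreeM (N.restrict F) := fun S hS => hN S (hS.trans hF)

lemma free_flats {N : FinMatroid α} (hN : IsFreeM N) : N.flats = N.E.powerset := by
  unfold flats
  rw [Finset.filter_eq_self]
  intro F hF
  rw [Finset.mem_powerset] at hF
  refine ⟨hF, fun x hx hxF => ?_⟩
  rw [hN F hF, hN _ (Finset.insert_subset hx hF), Finset.card_insert_of_notMem hxF]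
  omega

lemma free_properFlats {N : FinMatroid α} (hN : IsFreeM N) :
    N.properFlats = N.E.powerset.filter (fun F => F ≠ N.E) := by
  unfold properFlats; rw [free_flats hN]

lemma free_redCC {N : FinMatroid α} (hN : IsFreeM N) {F : Finset α} (hF : F ⊆ N.E)
    (hne : F ≠ N.E) :
    N.redCharContractOne F = if (N.E \ F).card = 1 then 1 else 0 := by
  have hD : (N.E \ F).Nonempty := by
    rw [Finset.sdiff_nonempty]; exact fun h => hne (Finset.Subset.antisymm hF h)
  have hd1 : 1 ≤ (N.E \ F).card := Finset.card_pos.mpr hD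
  rw [redCharContractOne, contractCharPoly, redCC_formula _ _ hD]
  have hg : ∀ S ∈ (N.E \ F).powerset,
      (-1:ℚ)^S.card * ((((fun S => N.rk (S ∪ F) - N.rk F) (N.E \ F)
          - (fun S => N.rk (S ∪ F) - N.rk F) S) : ℕ) : ℚ)
      = (fun c => (-1:ℚ)^c * ((((N.E \ F).card - c) : ℕ) : ℚ)) S.card := by
    intro S hS
    rw [Finset.mem_powerset] at hS
    simp only
    have hSE : S ⊆ N.E := hS.trans (Finset.sdiff_subset)
    have hdisj : Disjoint S F := Finset.disjoint_left.mpr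
      (fun a haS haF => (Finset.mem_sdiff.mp (hS haS)).2 haF)
    have h1 : N.rk (S ∪ F) = S.card + F.card := by
      rw [hN _ (Finset.union_subset hSE hF), Finset.card_union_of_disjoint hdisj]
    have h2 : N.rk ((N.E \ F) ∪ F) = (N.E \ F).card + F.card := by
      rw [hN _ (Finset.union_subset Finset.sdiff_subset hF),
        Finset.card_union_of_disjoint Finset.sdiff_disjoint]
    have h3 : N.rk F = F.card := hN F hF
    rw [h1, h2, h3]
    congr 2
    omega
  rw [Finset.sum_congr rfl hg, Finset.sum_powerset_apply_card (fun c => (-1:ℚ)^c * ((((N.E \ F).card - c) : ℕ) : ℚ))]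
  have h4 : ∀ i ∈ Finset.range ((N.E \ F).card + 1),
      (N.E \ F).card.choose i • ((fun c => (-1:ℚ)^c * ((((N.E \ F).card - c) : ℕ) : ℚ)) i)
      = ((N.E \ F).card.choose i : ℚ) * ((-1)^i * ((((N.E \ F).card - i) : ℕ) : ℚ)) := by
    intro i _; rw [nsmul_eq_mul]
  rw [Finset.sum_congr rfl h4, alt_sum_choose_mul _ hd1]

lemma X_add_one_ne_zero : (RatFunc.X + 1 : RatFunc ℚ) ≠ 0 := by
  have h : (RatFunc.X + 1 : RatFunc ℚ) = algebraMap (Polynomial ℚ) _ (X + 1) := by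
    rw [map_add, RatFunc.algebraMap_X, map_one]
  rw [h]
  refine (map_ne_zero_iff _ (RatFunc.algebraMap_injective ℚ)).mpr ?_
  intro h2
  have h3 := congrArg (Polynomial.eval 0) h2
  simp at h3

lemma linear_ne_zero (n r : ℕ) (hr : 1 ≤ r) :
    ((n : RatFunc ℚ) * RatFunc.X + (r : RatFunc ℚ)) ≠ 0 := by
  have h : ((n : RatFunc ℚ) * RatFunc.X + (r : RatFunc ℚ))
      = algebraMap (Polynomial ℚ) _ ((n : ℚ[X]) * X + (r : ℚ[X])) := by
    rw [map_add, map_mul, RatFunc.algebraMap_X, map_natCast, map_natCast]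
  rw [h]
  refine (map_ne_zero_iff _ (RatFunc.algebraMap_injective ℚ)).mpr ?_
  intro h2
  have h3 := congrArg (Polynomial.eval 0) h2
  simp at h3
  omega

lemma Z_freeM {Z : FinMatroid α → RatFunc ℚ} (hZ : IsTopZeta Z) :
    ∀ (d : ℕ) (N : FinMatroid α), IsFreeM N → N.E.card = d →
      Z N = ((RatFunc.X + 1 : RatFunc ℚ))⁻¹ ^ d := by
  intro d
  induction d using Nat.strong_induction_on with
  | _ d ih =>
    intro N hN hcard
    rcases Nat.eq_zero_or_pos d with hd0 | hd1
    · subst hd0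
      rw [hZ.1 N (Finset.card_eq_zero.mp hcard), pow_zero]
    · have hne : N.E.Nonempty := Finset.card_pos.mp (by omega)
      have hrkE : N.rk N.E = d := by rw [hN N.E (subset_refl _), hcard]
      have hPF : N.properFlats = N.E.powerset.filter (fun F => F.card < d) := by
        rw [free_properFlats hN]
        refine Finset.filter_congr fun F hF => ?_
        rw [Finset.mem_powerset] at hF
        constructor
        · intro h
          refine lt_of_le_of_ne (hcard ▸ Finset.card_le_card hF) fun hc => h ?_
          exact Finset.eq_of_subset_of_card_le hF (le_of_eq (hcard.trans hc.symm))
        · intro h hc; subst hc; omega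
      have hsum : ∀ F ∈ N.E.powerset.filter (fun F => F.card < d),
          RatFunc.C (N.redCharContractOne F) * Z (N.restrict F)
          = (fun c => (if d - c = 1 then (1:RatFunc ℚ) else 0) * ((RatFunc.X+1)⁻¹)^c) F.card := by
        intro F hF
        rw [Finset.mem_filter, Finset.mem_powerset] at hF
        obtain ⟨hFE, hFd⟩ := hF
        have hne' : F ≠ N.E := fun h => by rw [h, hcard] at hFd; omega
        rw [free_redCC hN hFE hne', ih F.card (by omega) (N.restrict F)
          (isFreeM_restrict hN hFE) rfl]
        have hc2 : (N.E \ F).card = d - F.card := by rw [Finset.card_sdiff_of_subset hFE, hcard]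
        rw [hc2]
        simp only [apply_ite RatFunc.C, map_one, map_zero]
      have hsingle : ∑ i ∈ Finset.range d,
          d.choose i • ((if d - i = 1 then (1:RatFunc ℚ) else 0) * ((RatFunc.X+1)⁻¹)^i)
          = (d : RatFunc ℚ) * ((RatFunc.X+1)⁻¹)^(d-1) := by
        rw [Finset.sum_eq_single (d-1)]
        · rw [if_pos (by omega), one_mul, nsmul_eq_mul]
          congr 2
          rw [show d - 1 = d - 1 from rfl]
          have : d.choose (d-1) = d.choose 1 := by
            have := Nat.choose_symm (show 1 ≤ d from hd1) (n := d)
            simpa using this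
          rw [this, Nat.choose_one_right]
        · intro i hi hne2
          rw [Finset.mem_range] at hi
          rw [if_neg (by omega), zero_mul, smul_zero]
        · intro h; exact absurd (Finset.mem_range.mpr (by omega)) h
      rw [hZ.2 N hne, hPF, Finset.sum_congr rfl hsum,
        sum_powerset_filter_card N.E d (by omega)
          (fun c => (if d - c = 1 then (1:RatFunc ℚ) else 0) * ((RatFunc.X+1)⁻¹)^c), hcard, hrkE, hsingle]
      have hXne : (RatFunc.X + 1 : RatFunc ℚ) ≠ 0 := X_add_one_ne_zero
      have hdenom : ((d:RatFunc ℚ) * RatFunc.X + (d:RatFunc ℚ)) ≠ 0 := by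
        have he : ((d:RatFunc ℚ) * RatFunc.X + (d:RatFunc ℚ)) = (d:RatFunc ℚ) * (RatFunc.X + 1) := by
          ring
        rw [he]
        refine mul_ne_zero ?_ hXne
        have hd2 : (d : RatFunc ℚ) = algebraMap (Polynomial ℚ) _ (d : ℚ[X]) := by
          rw [map_natCast]
        rw [hd2]
        refine (map_ne_zero_iff _ (RatFunc.algebraMap_injective ℚ)).mpr ?_
        exact_mod_cast (Nat.cast_ne_zero (R := ℚ[X])).mpr (by omega)
      rw [div_eq_iff hdenom]
      have h1 : ((RatFunc.X+1:RatFunc ℚ))⁻¹ * (RatFunc.X+1) = 1 := inv_mul_cancel₀ hXne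
      have hd' : ((RatFunc.X+1:RatFunc ℚ))⁻¹ ^ d = ((RatFunc.X+1)⁻¹)^(d-1) * (RatFunc.X+1)⁻¹ := by
        rw [← pow_succ]; congr 1; omega
      rw [hd']
      linear_combination (-(d:RatFunc ℚ) * ((RatFunc.X+1:RatFunc ℚ))⁻¹^(d-1)) * h1

end AuxMat

section AuxUnif
set_option linter.unusedSectionVars false
set_option maxHeartbeats 1000000
open Finset Polynomial FinMatroid

variable {α : Type*} [DecidableEq α]

lemma uniformM_rk_subset (E : Finset α) (r : ℕ) {S : Finset α} (hS : S ⊆ E) :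
    (uniformM E r).rk S = min S.card r := by
  show min (S ∩ E).card r = _
  rw [Finset.inter_eq_left.mpr hS]

lemma uniformM_isFlat_of_small (E : Finset α) (r : ℕ) {F : Finset α} (hFE : F ⊆ E)
    (hFr : F.card < r) : (uniformM E r).IsFlat F := by
  refine ⟨hFE, fun x hxE hxF => ?_⟩
  rw [uniformM_rk_subset E r hFE, uniformM_rk_subset E r (Finset.insert_subset hxE hFE),
    Finset.card_insert_of_notMem hxF]
  omega

lemma uniformM_flats (E : Finset α) (r : ℕ) (hrn : r ≤ E.card) :
    (uniformM E r).flats = insert E (E.powerset.filter (fun F => F.card < r)) := by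
  ext F
  simp only [flats, Finset.mem_filter, Finset.mem_powerset, Finset.mem_insert]
  simp only [IsFlat]
  constructor
  · rintro ⟨hFE, -, hflat⟩
    by_cases hFeq : F = E
    · left; exact hFeq
    · right
      refine ⟨hFE, ?_⟩
      obtain ⟨x, hxE, hxF⟩ := Finset.exists_of_ssubset (lt_of_le_of_ne hFE hFeq)
      have h1 := hflat x hxE hxF
      rw [uniformM_rk_subset E r hFE, uniformM_rk_subset E r (Finset.insert_subset hxE hFE),
        Finset.card_insert_of_notMem hxF] at h1
      omega
  · rintro (rfl | ⟨hFE, hFr⟩)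
    · exact ⟨subset_refl _, subset_refl _, fun x hx hxF => absurd hx hxF⟩
    · exact ⟨hFE, (uniformM_isFlat_of_small E r hFE hFr).1,
        (uniformM_isFlat_of_small E r hFE hFr).2⟩

lemma uniformM_properFlats (E : Finset α) (r : ℕ) (hrn : r ≤ E.card) :
    (uniformM E r).properFlats = E.powerset.filter (fun F => F.card < r) := by
  have hME : (uniformM E r).E = E := rfl
  unfold properFlats
  rw [uniformM_flats E r hrn, hME, Finset.filter_insert, if_neg (by simp)]
  refine Finset.filter_true_of_mem ?_
  intro F hF
  rw [Finset.mem_filter, Finset.mem_powerset] at hF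
  intro h
  rw [h] at hF
  omega

lemma uniformM_restrict_free (E : Finset α) (r : ℕ) {F : Finset α} (hFE : F ⊆ E)
    (hFr : F.card < r) : IsFreeM ((uniformM E r).restrict F) := by
  intro S hS
  have hSF : S ⊆ F := hS
  have hS' : S ⊆ E := Finset.Subset.trans hSF hFE
  show min (S ∩ E).card r = S.card
  rw [Finset.inter_eq_left.mpr hS']
  have h1 : S.card ≤ F.card := Finset.card_le_card hSF
  omega

lemma mu_top (μ : FinMatroid α → Finset α → ℤ) (hμ : IsFlatMobius μ)
    (E : Finset α) (r : ℕ) : μ (uniformM E r) E = 1 := by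
  have hflat : (uniformM E r).IsFlat E := ⟨subset_refl _, fun x hx hxF => absurd hx hxF⟩
  have h := hμ (uniformM E r) E hflat
  have hfil : (uniformM E r).flats.filter (fun G => E ⊆ G) = {E} := by
    ext G
    simp only [Finset.mem_filter, Finset.mem_singleton, flats, Finset.mem_powerset]
    constructor
    · rintro ⟨⟨hGE, -⟩, hEG⟩; exact Finset.Subset.antisymm hGE hEG
    · rintro rfl; exact ⟨⟨subset_refl _, hflat⟩, subset_refl _⟩
  have hEE : E = (uniformM E r).E := rfl
  rw [hfil, Finset.sum_singleton, if_pos hEE] at h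
  exact h

lemma mu_uniform (μ : FinMatroid α → Finset α → ℤ) (hμ : IsFlatMobius μ)
    (E : Finset α) (r : ℕ) (hr : 1 ≤ r) (hrn : r ≤ E.card) :
    ∀ (d : ℕ) (F : Finset α), F ⊆ E → F.card < r → E.card - F.card ≤ d →
      μ (uniformM E r) F = wμ (E.card - F.card) (r - F.card) := by
  intro d
  induction d with
  | zero =>
    intro F hFE hFr hd
    have := Finset.card_le_card hFE
    omega
  | succ d ih =>
    intro F hFE hFr hd
    have hcardF := Finset.card_le_card hFE
    have hflat : (uniformM E r).IsFlat F := uniformM_isFlat_of_small E r hFE hFr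
    have heq := hμ (uniformM E r) F hflat
    rw [if_neg (show ¬ F = (uniformM E r).E from fun h => by
      have : F = E := h
      rw [this] at hFr; omega)] at heq
    have hfil : (uniformM E r).flats.filter (fun G => F ⊆ G)
        = insert E ((E.powerset.filter (fun G => G.card < r)).filter (fun G => F ⊆ G)) := by
      rw [uniformM_flats E r hrn, Finset.filter_insert, if_pos hFE]
    have hEnot : E ∉ (E.powerset.filter (fun G => G.card < r)).filter (fun G => F ⊆ G) := by
      simp only [Finset.mem_filter, Finset.mem_powerset]
      rintro ⟨⟨-, h⟩, -⟩; omega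
    rw [hfil, Finset.sum_insert hEnot, mu_top μ hμ E r] at heq
    -- reindex the proper-flat sum
    have hbij : ∑ G ∈ (E.powerset.filter (fun G => G.card < r)).filter (fun G => F ⊆ G),
        μ (uniformM E r) G
        = ∑ H ∈ (E \ F).powerset.filter (fun H => H.card < r - F.card),
            μ (uniformM E r) (F ∪ H) := by
      refine Finset.sum_nbij' (fun G => G \ F) (fun H => F ∪ H) ?_ ?_ ?_ ?_ ?_
      · intro G hG
        simp only [Finset.mem_filter, Finset.mem_powerset] at hG ⊢
        obtain ⟨⟨hGE, hGr⟩, hFG⟩ := hG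
        have := Finset.card_le_card hFG
        refine ⟨Finset.sdiff_subset_sdiff hGE (subset_refl _), ?_⟩
        rw [Finset.card_sdiff_of_subset hFG]
        omega
      · intro H hH
        simp only [Finset.mem_filter, Finset.mem_powerset] at hH ⊢
        obtain ⟨hHE, hHr⟩ := hH
        have hHE' : H ⊆ E := Finset.Subset.trans hHE Finset.sdiff_subset
        have hdisj : Disjoint F H := Finset.disjoint_left.mpr
          (fun a haF haH => (Finset.mem_sdiff.mp (hHE haH)).2 haF)
        refine ⟨⟨Finset.union_subset hFE hHE', ?_⟩, Finset.subset_union_left⟩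
        rw [Finset.card_union_of_disjoint hdisj]
        omega
      · intro G hG
        simp only [Finset.mem_filter, Finset.mem_powerset] at hG
        exact Finset.union_sdiff_of_subset hG.2
      · intro H hH
        simp only [Finset.mem_filter, Finset.mem_powerset] at hH
        have hdisj : Disjoint F H := Finset.disjoint_left.mpr
          (fun a haF haH => (Finset.mem_sdiff.mp (hH.1 haH)).2 haF)
        exact Finset.union_sdiff_cancel_left hdisj
      · intro G hG
        simp only [Finset.mem_filter, Finset.mem_powerset] at hG
        rw [Finset.union_sdiff_of_subset hG.2]
    rw [hbij] at heq
    set m := E.card - F.card with hm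
    set ρ := r - F.card with hρ
    have hρ1 : 1 ≤ ρ := by omega
    have hρm : ρ ≤ m := by omega
    have hDcard : (E \ F).card = m := by rw [Finset.card_sdiff_of_subset hFE]
    have hmem0 : (∅ : Finset α) ∈ (E \ F).powerset.filter (fun H => H.card < ρ) := by
      simp only [Finset.mem_filter, Finset.mem_powerset, Finset.empty_subset, true_and,
        Finset.card_empty]
      omega
    -- replace μ by wμ on nonempty H
    have hval : ∀ H ∈ ((E \ F).powerset.filter (fun H => H.card < ρ)).erase ∅,
        μ (uniformM E r) (F ∪ H) = (fun c => wμ (m - c) (ρ - c)) H.card := by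
      intro H hH
      rw [Finset.mem_erase, Finset.mem_filter, Finset.mem_powerset] at hH
      obtain ⟨hHne, hHE, hHρ⟩ := hH
      have hHpos : 1 ≤ H.card := Finset.card_pos.mpr (Finset.nonempty_of_ne_empty hHne)
      have hHE' : H ⊆ E := Finset.Subset.trans hHE Finset.sdiff_subset
      have hdisj : Disjoint F H := Finset.disjoint_left.mpr
        (fun a haF haH => (Finset.mem_sdiff.mp (hHE haH)).2 haF)
      have hcard : (F ∪ H).card = F.card + H.card := Finset.card_union_of_disjoint hdisj
      have h1 := ih (F ∪ H) (Finset.union_subset hFE hHE') (by omega) (by omega)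
      rw [h1, hcard]
      simp only
      congr 1 <;> omega
    have hsplit : ∑ H ∈ (E \ F).powerset.filter (fun H => H.card < ρ), μ (uniformM E r) (F ∪ H)
        = μ (uniformM E r) F
          + ∑ H ∈ ((E \ F).powerset.filter (fun H => H.card < ρ)).erase ∅,
              (fun c => wμ (m - c) (ρ - c)) H.card := by
      rw [← Finset.add_sum_erase _ _ hmem0, Finset.union_empty,
        Finset.sum_congr rfl hval]
    have hsplit2 : ∑ H ∈ (E \ F).powerset.filter (fun H => H.card < ρ),
          (fun c => wμ (m - c) (ρ - c)) H.card
        = (fun c => wμ (m - c) (ρ - c)) (0:ℕ)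
          + ∑ H ∈ ((E \ F).powerset.filter (fun H => H.card < ρ)).erase ∅,
              (fun c => wμ (m - c) (ρ - c)) H.card := by
      rw [← Finset.add_sum_erase _ _ hmem0, Finset.card_empty]
    have hfull : ∑ H ∈ (E \ F).powerset.filter (fun H => H.card < ρ),
        (fun c => wμ (m - c) (ρ - c)) H.card = -1 := by
      rw [sum_powerset_filter_card (E \ F) ρ (by omega) (fun c => wμ (m - c) (ρ - c)), hDcard]
      have : ∀ i ∈ Finset.range ρ, m.choose i • wμ (m - i) (ρ - i)
          = (m.choose i : ℤ) * wμ (m - i) (ρ - i) := fun i _ => nsmul_eq_mul _ _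
      rw [Finset.sum_congr rfl this, wμ_system m ρ hρ1 hρm]
    simp only at hsplit hsplit2 hfull
    simp only [Nat.sub_zero] at hsplit2
    omega

end AuxUnif

section AuxFinal
set_option linter.unusedSectionVars false
set_option maxHeartbeats 1000000
open Finset Polynomial FinMatroid

variable {α : Type*} [DecidableEq α]

/-- the reduced characteristic polynomial value of the contraction, as a sum -/
def cQ (m ρ : ℕ) : ℚ :=
  ∑ i ∈ Finset.range ρ, (m.choose i : ℚ) * ((-1)^i * ((ρ - i : ℕ) : ℚ))

lemma uniformM_redCC (E : Finset α) (r : ℕ) (hr : 1 ≤ r) (hrn : r ≤ E.card)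
    {F : Finset α} (hFE : F ⊆ E) (hFr : F.card < r) :
    (uniformM E r).redCharContractOne F = cQ (E.card - F.card) (r - F.card) := by
  set m := E.card - F.card with hm
  set ρ := r - F.card with hρ
  have hcardF := Finset.card_le_card hFE
  have hD : ((uniformM E r).E \ F).Nonempty := by
    rw [show (uniformM E r).E = E from rfl, Finset.sdiff_nonempty]
    intro h
    have := Finset.card_le_card h
    omega
  have hDcard : ((uniformM E r).E \ F).card = m := by
    rw [show (uniformM E r).E = E from rfl, Finset.card_sdiff_of_subset hFE]
  rw [redCharContractOne, contractCharPoly, redCC_formula _ _ hD]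
  have hg : ∀ S ∈ ((uniformM E r).E \ F).powerset,
      (-1:ℚ)^S.card * ((((fun S => (uniformM E r).rk (S ∪ F) - (uniformM E r).rk F)
          ((uniformM E r).E \ F)
        - (fun S => (uniformM E r).rk (S ∪ F) - (uniformM E r).rk F) S) : ℕ) : ℚ)
      = (fun c => (-1:ℚ)^c * ((ρ - min c ρ : ℕ) : ℚ)) S.card := by
    intro S hS
    rw [Finset.mem_powerset, show (uniformM E r).E = E from rfl] at hS
    simp only
    have hSE : S ⊆ E := Finset.Subset.trans hS Finset.sdiff_subset
    have hScard : S.card ≤ m := by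
      have := Finset.card_le_card hS
      rw [Finset.card_sdiff_of_subset hFE] at this
      exact this
    have hdisj : Disjoint S F := Finset.disjoint_left.mpr
      (fun a haS haF => (Finset.mem_sdiff.mp (hS haS)).2 haF)
    have h1 : (uniformM E r).rk (S ∪ F) = min (S.card + F.card) r := by
      rw [uniformM_rk_subset E r (Finset.union_subset hSE hFE),
        Finset.card_union_of_disjoint hdisj]
    have h2 : (uniformM E r).rk ((uniformM E r).E \ F ∪ F) = r := by
      rw [show (uniformM E r).E = E from rfl, Finset.sdiff_union_of_subset hFE,
        uniformM_rk_subset E r (subset_refl _)]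
      omega
    have h3 : (uniformM E r).rk F = F.card := by
      rw [uniformM_rk_subset E r hFE]
      omega
    rw [h1, h2, h3]
    congr 2
    omega
  rw [Finset.sum_congr rfl hg,
    Finset.sum_powerset_apply_card (fun c => (-1:ℚ)^c * ((ρ - min c ρ : ℕ) : ℚ)), hDcard]
  have hρm : ρ ≤ m := by omega
  rw [← Finset.sum_subset (Finset.range_subset_range.mpr (show ρ ≤ m + 1 by omega))
    (fun i hi hni => by
      rw [Finset.mem_range, not_lt] at hni
      have : min i ρ = ρ := by omega
      rw [this, Nat.sub_self]
      simp)]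
  refine Finset.sum_congr rfl fun i hi => ?_
  rw [Finset.mem_range] at hi
  rw [nsmul_eq_mul]
  congr 3
  omega

lemma Z_uniform {Z : FinMatroid α → RatFunc ℚ} (hZ : IsTopZeta Z)
    (E : Finset α) (r : ℕ) (hr : 1 ≤ r) (hrn : r ≤ E.card) :
    Z (uniformM E r) * ((E.card : RatFunc ℚ) * RatFunc.X + (r : RatFunc ℚ))
      = ∑ j ∈ Finset.range r, (E.card.choose j) •
          (RatFunc.C (cQ (E.card - j) (r - j)) * ((RatFunc.X + 1 : RatFunc ℚ))⁻¹ ^ j) := by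
  have hne : (uniformM E r).E.Nonempty := by
    show E.Nonempty
    exact Finset.card_pos.mp (by omega)
  have hME : (uniformM E r).E = E := rfl
  have hrk : (uniformM E r).rk ((uniformM E r).E) = r := by
    rw [hME, uniformM_rk_subset E r (subset_refl _)]
    omega
  rw [hZ.2 _ hne, hrk, hME, uniformM_properFlats E r hrn]
  have hsum : ∀ F ∈ E.powerset.filter (fun F => F.card < r),
      RatFunc.C ((uniformM E r).redCharContractOne F) * Z ((uniformM E r).restrict F)
      = (fun c => RatFunc.C (cQ (E.card - c) (r - c)) * ((RatFunc.X + 1 : RatFunc ℚ))⁻¹ ^ c)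
          F.card := by
    intro F hF
    rw [Finset.mem_filter, Finset.mem_powerset] at hF
    rw [uniformM_redCC E r hr hrn hF.1 hF.2,
      Z_freeM hZ F.card ((uniformM E r).restrict F) (uniformM_restrict_free E r hF.1 hF.2) rfl]
  rw [Finset.sum_congr rfl hsum, sum_powerset_filter_card E r (by omega)
    (fun c => RatFunc.C (cQ (E.card - c) (r - c)) * ((RatFunc.X + 1 : RatFunc ℚ))⁻¹ ^ c)]
  rw [div_mul_cancel₀ _ (linear_ne_zero E.card r hr)]

/-- the telescoping binomial sum -/
lemma telescope {K : Type*} [Field K] (x u : K) (h : x + u + x * u = 0) (n : ℕ) :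
    ∀ r : ℕ, 1 ≤ r → r ≤ n →
      ∑ k ∈ Finset.range r, (n.choose k : K) * ((n : K) * x + (k : K)) * u ^ k
        = (r : K) * (n.choose r : K) * x * u ^ (r - 1) := by
  intro r
  induction r with
  | zero => omega
  | succ r ih =>
    intro _ hrn
    rcases Nat.eq_zero_or_pos r with hr0 | hr1
    · subst hr0
      simp [Nat.choose_one_right]
    · rw [Finset.sum_range_succ, ih hr1 (by omega)]
      have hpow : u ^ r = u ^ (r - 1) * u := by
        rw [← pow_succ]; congr 1; omega
      have hkey : ((r:K) + 1) * ((n.choose (r+1) : ℕ) : K) = (n.choose r : K) * ((n:K) - r) := by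
        have h1 := Nat.choose_succ_right_eq n r
        have h2 : ((n.choose (r+1) * (r+1) : ℕ) : K) = ((n.choose r * (n - r) : ℕ) : K) := by
          rw [h1]
        push_cast [Nat.cast_sub (show r ≤ n by omega)] at h2
        linear_combination h2
      rw [Nat.succ_sub_one, hpow]
      push_cast
      linear_combination ((n.choose r : K) * (r : K) * u ^ (r-1)) * h - (x * u ^ (r-1) * u) * hkey
end AuxFinal

open FinMatroid in
/-- the Möbius inversion of the topological zeta function of the uniform
matroid `U_{r,n}` is `(1/(ns+r)) (-rs (-s/(s+1))^{r-1} C(n,r))`. -/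
theorem mobiusInv_uniform {α : Type*} [DecidableEq α]
    (Z Y : FinMatroid α → RatFunc ℚ) (μ : FinMatroid α → Finset α → ℤ)
    (hZ : IsTopZeta Z) (hμ : IsFlatMobius μ) (hY : IsMobiusInv μ Z Y)
    (E : Finset α) (r : ℕ) (hr : 1 ≤ r) (hrn : r ≤ E.card) :
    Y (FinMatroid.uniformM E r) =
      (1 / ((E.card : RatFunc ℚ) * RatFunc.X + (r : RatFunc ℚ))) *
        (-(r : RatFunc ℚ) * RatFunc.X * (-RatFunc.X / (RatFunc.X + 1)) ^ (r - 1) *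
          (E.card.choose r : RatFunc ℚ)) := by
  classical
  have hXne : (RatFunc.X + 1 : RatFunc ℚ) ≠ 0 := X_add_one_ne_zero
  have hqne : ((E.card : RatFunc ℚ) * RatFunc.X + (r : RatFunc ℚ)) ≠ 0 :=
    linear_ne_zero E.card r hr
  have h1 : ((RatFunc.X + 1 : RatFunc ℚ))⁻¹ * (RatFunc.X + 1) = 1 := inv_mul_cancel₀ hXne
  -- decompose Y
  have hEnot : E ∉ E.powerset.filter (fun F => F.card < r) := by
    simp only [Finset.mem_filter, Finset.mem_powerset]
    rintro ⟨-, h⟩; omega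
  have hYM := hY (uniformM E r)
  rw [uniformM_flats E r hrn, Finset.sum_insert hEnot,
    show (uniformM E r).restrict E = uniformM E r from rfl, mu_top μ hμ E r, Int.cast_one,
    one_mul] at hYM
  have hsum : ∀ F ∈ E.powerset.filter (fun F => F.card < r),
      ((μ (uniformM E r) F : ℤ) : RatFunc ℚ) * Z ((uniformM E r).restrict F)
      = (fun c => ((wμ (E.card - c) (r - c) : ℤ) : RatFunc ℚ)
          * ((RatFunc.X + 1 : RatFunc ℚ))⁻¹ ^ c) F.card := by
    intro F hF
    rw [Finset.mem_filter, Finset.mem_powerset] at hF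
    rw [mu_uniform μ hμ E r hr hrn (E.card - F.card) F hF.1 hF.2 (le_refl _),
      Z_freeM hZ F.card ((uniformM E r).restrict F)
        (uniformM_restrict_free E r hF.1 hF.2) rfl]
  rw [Finset.sum_congr rfl hsum, sum_powerset_filter_card E r (by omega)
    (fun c => ((wμ (E.card - c) (r - c) : ℤ) : RatFunc ℚ)
      * ((RatFunc.X + 1 : RatFunc ℚ))⁻¹ ^ c)] at hYM
  -- multiply by the denominator
  have hZq := Z_uniform hZ E r hr hrn
  have hqY : ((E.card : RatFunc ℚ) * RatFunc.X + (r : RatFunc ℚ)) * Y (uniformM E r)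
      = ∑ j ∈ Finset.range r, ((E.card.choose j : ℕ) : RatFunc ℚ) *
        ((RatFunc.C (cQ (E.card - j) (r - j))
          + ((E.card : RatFunc ℚ) * RatFunc.X + (r : RatFunc ℚ))
            * ((wμ (E.card - j) (r - j) : ℤ) : RatFunc ℚ))
          * ((RatFunc.X + 1 : RatFunc ℚ))⁻¹ ^ j) := by
    rw [hYM, mul_add,
      mul_comm ((E.card : RatFunc ℚ) * RatFunc.X + (r : RatFunc ℚ)) (Z (uniformM E r)), hZq,
      Finset.mul_sum, ← Finset.sum_add_distrib]
    refine Finset.sum_congr rfl fun j hj => ?_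
    simp only [nsmul_eq_mul]
    ring
  -- the termwise identity
  have hinner : ∀ j ∈ Finset.range r,
      RatFunc.C (cQ (E.card - j) (r - j))
        + ((E.card : RatFunc ℚ) * RatFunc.X + (r : RatFunc ℚ))
          * ((wμ (E.card - j) (r - j) : ℤ) : RatFunc ℚ)
      = -∑ i ∈ Finset.range (r - j), (((E.card - j).choose i : ℕ) : RatFunc ℚ)
          * ((-1)^i * ((E.card : RatFunc ℚ) * RatFunc.X + (j : RatFunc ℚ) + (i : RatFunc ℚ))) := by
    intro j hj
    rw [Finset.mem_range] at hj
    rw [cQ, map_sum, wμ]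
    simp only [map_mul, map_pow, map_neg, map_one, map_natCast, Int.cast_neg, Int.cast_sum,
      Int.cast_mul, Int.cast_pow, Int.cast_one, Int.cast_natCast]
    rw [mul_neg, ← Finset.sum_neg_distrib, Finset.mul_sum, ← Finset.sum_neg_distrib,
      ← Finset.sum_add_distrib]
    refine Finset.sum_congr rfl fun i hi => ?_
    rw [Finset.mem_range] at hi
    have hc1 : ((r - j - i : ℕ) : RatFunc ℚ) = (r : RatFunc ℚ) - (j : RatFunc ℚ) - (i : RatFunc ℚ) := by
      rw [Nat.cast_sub (show i ≤ r - j by omega), Nat.cast_sub (show j ≤ r by omega)]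
    rw [hc1]
    ring
  -- rewrite as a double sum
  have hqY2 : ((E.card : RatFunc ℚ) * RatFunc.X + (r : RatFunc ℚ)) * Y (uniformM E r)
      = -∑ j ∈ Finset.range r, ∑ i ∈ Finset.range (r - j),
        (fun j i => ((E.card.choose j : ℕ) : RatFunc ℚ) * ((((E.card - j).choose i : ℕ) : RatFunc ℚ)
          * ((-1)^i * ((E.card : RatFunc ℚ) * RatFunc.X + (j : RatFunc ℚ) + (i : RatFunc ℚ)))
          * ((RatFunc.X + 1 : RatFunc ℚ))⁻¹ ^ j)) j i := by
    rw [hqY, Finset.sum_congr rfl (fun j hj => by rw [hinner j hj])]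
    rw [Finset.sum_congr rfl (fun j (hj : j ∈ Finset.range r) => by
      rw [neg_mul, mul_neg, Finset.sum_mul, Finset.mul_sum]), Finset.sum_neg_distrib]
  rw [sum_triangle' r
    (fun j i => ((E.card.choose j : ℕ) : RatFunc ℚ) * ((((E.card - j).choose i : ℕ) : RatFunc ℚ)
      * ((-1)^i * ((E.card : RatFunc ℚ) * RatFunc.X + (j : RatFunc ℚ) + (i : RatFunc ℚ)))
      * ((RatFunc.X + 1 : RatFunc ℚ))⁻¹ ^ j))] at hqY2
  -- inner binomial sum
  have hswap : ∀ k ∈ Finset.range r,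
      (∑ j ∈ Finset.range (k+1),
        ((E.card.choose j : ℕ) : RatFunc ℚ) * ((((E.card - j).choose (k - j) : ℕ) : RatFunc ℚ)
          * ((-1)^(k - j) * ((E.card : RatFunc ℚ) * RatFunc.X + (j : RatFunc ℚ) + ((k - j : ℕ) : RatFunc ℚ)))
          * ((RatFunc.X + 1 : RatFunc ℚ))⁻¹ ^ j))
      = ((E.card.choose k : ℕ) : RatFunc ℚ)
          * ((E.card : RatFunc ℚ) * RatFunc.X + (k : RatFunc ℚ))
          * ((RatFunc.X + 1 : RatFunc ℚ)⁻¹ + (-1)) ^ k := by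
    intro k hk
    rw [Finset.mem_range] at hk
    have hterm : ∀ j ∈ Finset.range (k+1),
        ((E.card.choose j : ℕ) : RatFunc ℚ) * ((((E.card - j).choose (k - j) : ℕ) : RatFunc ℚ)
          * ((-1)^(k - j) * ((E.card : RatFunc ℚ) * RatFunc.X + (j : RatFunc ℚ) + ((k - j : ℕ) : RatFunc ℚ)))
          * ((RatFunc.X + 1 : RatFunc ℚ))⁻¹ ^ j)
        = ((E.card.choose k : ℕ) : RatFunc ℚ)
            * ((E.card : RatFunc ℚ) * RatFunc.X + (k : RatFunc ℚ))
            * (((RatFunc.X + 1 : RatFunc ℚ))⁻¹ ^ j * (-1)^(k - j) * ((k.choose j : ℕ) : RatFunc ℚ)) := by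
      intro j hj
      rw [Finset.mem_range] at hj
      have hjk : j ≤ k := by omega
      have hchoose := Nat.choose_mul (n := E.card) hjk
      have hch : ((E.card.choose j : ℕ) : RatFunc ℚ) * (((E.card - j).choose (k - j) : ℕ) : RatFunc ℚ)
          = ((E.card.choose k : ℕ) : RatFunc ℚ) * ((k.choose j : ℕ) : RatFunc ℚ) := by
        have := congrArg (Nat.cast : ℕ → RatFunc ℚ) hchoose
        push_cast at this
        exact this.symm
      have hc2 : ((k - j : ℕ) : RatFunc ℚ) = (k : RatFunc ℚ) - (j : RatFunc ℚ) :=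
        Nat.cast_sub hjk
      rw [hc2]
      calc ((E.card.choose j : ℕ) : RatFunc ℚ) * ((((E.card - j).choose (k - j) : ℕ) : RatFunc ℚ)
            * ((-1)^(k - j) * ((E.card : RatFunc ℚ) * RatFunc.X + (j : RatFunc ℚ) + ((k : RatFunc ℚ) - (j : RatFunc ℚ))))
            * ((RatFunc.X + 1 : RatFunc ℚ))⁻¹ ^ j)
          = (((E.card.choose j : ℕ) : RatFunc ℚ) * (((E.card - j).choose (k - j) : ℕ) : RatFunc ℚ))
            * ((-1)^(k - j) * ((E.card : RatFunc ℚ) * RatFunc.X + (k : RatFunc ℚ)))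
            * ((RatFunc.X + 1 : RatFunc ℚ))⁻¹ ^ j := by ring
        _ = (((E.card.choose k : ℕ) : RatFunc ℚ) * ((k.choose j : ℕ) : RatFunc ℚ))
            * ((-1)^(k - j) * ((E.card : RatFunc ℚ) * RatFunc.X + (k : RatFunc ℚ)))
            * ((RatFunc.X + 1 : RatFunc ℚ))⁻¹ ^ j := by rw [hch]
        _ = ((E.card.choose k : ℕ) : RatFunc ℚ)
            * ((E.card : RatFunc ℚ) * RatFunc.X + (k : RatFunc ℚ))
            * (((RatFunc.X + 1 : RatFunc ℚ))⁻¹ ^ j * (-1)^(k - j) * ((k.choose j : ℕ) : RatFunc ℚ)) := by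
            ring
    rw [Finset.sum_congr rfl hterm, ← Finset.mul_sum, add_pow ((RatFunc.X + 1 : RatFunc ℚ))⁻¹ (-1) k]
  rw [Finset.sum_congr rfl hswap] at hqY2
  -- telescope
  have hrel : RatFunc.X + ((RatFunc.X + 1 : RatFunc ℚ)⁻¹ + (-1))
      + RatFunc.X * ((RatFunc.X + 1 : RatFunc ℚ)⁻¹ + (-1)) = 0 := by
    linear_combination h1
  rw [telescope RatFunc.X ((RatFunc.X + 1 : RatFunc ℚ)⁻¹ + (-1)) hrel E.card r hr hrn] at hqY2
  -- conclude
  have hu : (-RatFunc.X / (RatFunc.X + 1) : RatFunc ℚ) = (RatFunc.X + 1 : RatFunc ℚ)⁻¹ + (-1) := by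
    rw [div_eq_iff hXne, add_mul, inv_mul_cancel₀ hXne]
    ring
  conv_lhs => rw [← inv_mul_cancel_left₀ hqne (Y (uniformM E r))]
  rw [hqY2, hu, one_div]
  ring
end
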